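/- arXiv:1911.13138 — 7 statements merged into one kernel-verified Lean document; each statement's English description precedes it below -/
import Mathlib

section
/- (Strong maximum principle.) Let N ≥ 1, 0 ≤ m ≤ 2, ε > 0, let a ∈ C(ℝ^N) and let J ∈ L¹(ℝ^N) be a nonnegative radially symmetric kernel with unit mass. Suppose that u_ε ∈ L^∞(ℝ^N) is a nonnegative solution of (KPP) almost everywhere in ℝ^N. Then either u_ε > 0 almost everywhere in ℝ^N or u_ε = 0 almost everywhere in ℝ^N. -/
open MeasureTheory Filter Metric Set

noncomputable section

abbrev Sp (N : ℕ) := EuclideanSpace ℝ (Fin N)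

/-- The rescaled kernel `J_ε(z) = ε^{-N} J(z/ε)`. -/
def Jresc (N : ℕ) (J : Sp N → ℝ) (ε : ℝ) (z : Sp N) : ℝ := (1 / ε ^ N) * J (ε⁻¹ • z)

/-- The convolution `(J_ε ∗ u)(x)`. -/
def convJ (N : ℕ) (J : Sp N → ℝ) (ε : ℝ) (u : Sp N → ℝ) (x : Sp N) : ℝ :=
  ∫ y, Jresc N J ε (x - y) * u y

/-- `u` satisfies the nonlocal KPP equation at the point `x`:
`ε^{-m} (J_ε ∗ u - u)(x) + u(x)(a(x) - u(x)) = 0`. -/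
def kppEq (N : ℕ) (J a : Sp N → ℝ) (m ε : ℝ) (u : Sp N → ℝ) (x : Sp N) : Prop :=
  (1 / ε ^ m) * (convJ N J ε u x - u x) + u x * (a x - u x) = 0

/-- Assumption (1.1): `a` continuous, bounded, `a⁺ ≢ 0`, `limsup_{|x|→∞} a(x) < 0`. -/
def assumpA (N : ℕ) (a : Sp N → ℝ) : Prop :=
  Continuous a ∧ (∃ C, ∀ x, |a x| ≤ C) ∧ (∃ x, 0 < a x) ∧
    (∃ R δ : ℝ, 0 < δ ∧ ∀ x : Sp N, R ≤ ‖x‖ → a x ≤ -δ)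

/-- Assumption (1.4): `J ∈ L¹` nonnegative, radially symmetric, with unit mass and
finite `m`-th order moment. -/
def assumpJ (N : ℕ) (J : Sp N → ℝ) (m : ℝ) : Prop :=
  Integrable J ∧ (∀ x, 0 ≤ J x) ∧ (∀ x y : Sp N, ‖x‖ = ‖y‖ → J x = J y) ∧
    (∫ x, J x) = 1 ∧ Integrable (fun x => J x * ‖x‖ ^ m)

open scoped Pointwise ENNReal


lemma smp_steinhaus {N : ℕ} (Q : Set (Sp N)) (hQm : MeasurableSet Q)
    (hQpos : 0 < volume Q) (hQfin : volume Q < ⊤) (hQsym : ∀ z, z ∈ Q ↔ -z ∈ Q) :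
    ∃ δ : ℝ, 0 < δ ∧ ∃ c : ℝ≥0∞, 0 < c ∧
      ∀ w : Sp N, ‖w‖ < δ → c ≤ volume (Q ∩ {t | w - t ∈ Q}) := by
  obtain ⟨K, hKQ, hKc, hKlt⟩ := hQm.exists_isCompact_lt_add hQfin.ne
    (ε := volume Q / 2) (ENNReal.div_pos hQpos.ne' (by norm_num)).ne'
  have hK0 : 0 < volume K := by
    by_contra h
    rw [not_lt, nonpos_iff_eq_zero] at h
    rw [h, zero_add] at hKlt
    exact absurd (ENNReal.half_le_self (a := volume Q)) (not_le.2 hKlt)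
  have hKfin : volume K ≠ ⊤ := ((measure_mono hKQ).trans_lt hQfin).ne
  obtain ⟨U, hKU, hUopen, hUlt⟩ := Set.exists_isOpen_lt_add K hKfin
    (ε := volume K / 2) (ENNReal.div_pos hK0.ne' (by norm_num)).ne'
  obtain ⟨δ, hδpos, hδsub⟩ := hKc.exists_thickening_subset_open hUopen hKU
  refine ⟨δ, hδpos, volume K / 2, ENNReal.div_pos hK0.ne' (by norm_num), ?_⟩
  intro w hw
  have hKmeas : MeasurableSet K := hKc.isClosed.measurableSet
  have hvK : (w +ᵥ K : Set (Sp N)) = (fun t => -w + t) ⁻¹' K := by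
    ext t
    constructor
    · rintro ⟨k, hk, rfl⟩; simpa using hk
    · intro ht; exact ⟨-w + t, ht, by simp⟩
  have hvKm : MeasurableSet (w +ᵥ K : Set (Sp N)) := by
    rw [hvK]; exact hKmeas.preimage (measurable_const_add _)
  have hmvol : volume (w +ᵥ K : Set (Sp N)) = volume K := by
    rw [hvK]; exact measure_preimage_add volume _ K
  have hsubU : K ∪ (w +ᵥ K) ⊆ U := by
    refine union_subset hKU ?_
    rintro x ⟨k, hk, rfl⟩
    apply hδsub
    rw [Metric.mem_thickening_iff]
    refine ⟨k, hk, ?_⟩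
    rw [dist_eq_norm]
    simpa using hw
  -- inclusion-exclusion
  have hie : volume (K ∪ (w +ᵥ K)) + volume (K ∩ (w +ᵥ K)) = volume K + volume (w +ᵥ K) :=
    measure_union_add_inter K hvKm
  have h2K : volume K + volume K ≤ volume U + volume (K ∩ (w +ᵥ K)) := by
    calc volume K + volume K = volume K + volume (w +ᵥ K) := by rw [hmvol]
    _ = volume (K ∪ (w +ᵥ K)) + volume (K ∩ (w +ᵥ K)) := hie.symm
    _ ≤ volume U + volume (K ∩ (w +ᵥ K)) := by
        exact add_le_add_left (measure_mono hsubU) _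
  have hhalf : volume K / 2 ≤ volume (K ∩ (w +ᵥ K)) := by
    have h3 : volume K + volume K ≤ volume K + (volume K / 2 + volume (K ∩ (w +ᵥ K))) := by
      refine h2K.trans ?_
      rw [← add_assoc]
      exact add_le_add_left hUlt.le _
    have h4 : volume K ≤ volume K / 2 + volume (K ∩ (w +ᵥ K)) :=
      (ENNReal.add_le_add_iff_left hKfin).1 h3
    have h5 : volume K - volume K / 2 ≤ volume (K ∩ (w +ᵥ K)) := tsub_le_iff_left.2 h4
    rwa [ENNReal.sub_half hKfin] at h5
  refine hhalf.trans (measure_mono ?_)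
  rintro x ⟨hxK, k, hk, rfl⟩
  refine ⟨hKQ hxK, ?_⟩
  show w - (w + k) ∈ Q
  have : w - (w + k) = -k := by abel
  rw [this]
  exact (hQsym k).1 (hKQ hk)


lemma smp_setmeas1 {N : ℕ} (Q : Set (Sp N)) (hQm : MeasurableSet Q) (x : Sp N) :
    MeasurableSet {y : Sp N | x - y ∈ Q} :=
  hQm.preimage (measurable_const.sub measurable_id)

lemma smp_setmeas2 {N : ℕ} (Q : Set (Sp N)) (hQm : MeasurableSet Q) (y : Sp N) :
    MeasurableSet {x : Sp N | x - y ∈ Q} :=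
  hQm.preimage (measurable_id.sub measurable_const)

lemma smp_reach_meas {N : ℕ} (E Q : Set (Sp N)) (hEm : MeasurableSet E)
    (hQm : MeasurableSet Q) :
    Measurable fun z : Sp N => volume (E ∩ {x | x - z ∈ Q}) := by
  have h1 : ∀ z : Sp N, volume (E ∩ {x | x - z ∈ Q})
      = ∫⁻ x, E.indicator 1 x * Q.indicator 1 (x - z) := by
    intro z
    have : (fun x : Sp N => E.indicator 1 x * Q.indicator 1 (x - z))
        = (E ∩ {x | x - z ∈ Q}).indicator (1 : Sp N → ℝ≥0∞) := by
      funext x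
      by_cases hx : x ∈ E <;> by_cases hx2 : x - z ∈ Q <;>
        simp [Set.indicator_apply, hx, hx2]
    rw [this, lintegral_indicator_one (hEm.inter (smp_setmeas2 Q hQm z))]
  simp only [h1]
  apply Measurable.lintegral_prod_right' (f := fun p : Sp N × Sp N =>
    E.indicator 1 p.2 * Q.indicator 1 (p.2 - p.1))
  exact ((measurable_const.indicator hEm).comp measurable_snd).mul
    ((measurable_const.indicator hQm).comp (measurable_snd.sub measurable_fst))

lemma smp_stepB {N : ℕ} (S Q : Set (Sp N)) (hSm : MeasurableSet S) (hQm : MeasurableSet Q)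
    (hkey : ∀ᵐ x : Sp N, x ∉ S → volume ({y | x - y ∈ Q} ∩ S) = 0)
    (E : Set (Sp N)) (hEm : MeasurableSet E) (hE0 : volume (E ∩ S) = 0) :
    volume ({y | 0 < volume (E ∩ {x | x - y ∈ Q})} ∩ S) = 0 := by
  classical
  set f : Sp N → Sp N → ℝ≥0∞ := fun x y =>
    E.indicator 1 x * Q.indicator 1 (x - y) * S.indicator 1 y with hf
  have hfm : Measurable (Function.uncurry f) := by
    refine Measurable.mul (Measurable.mul ?_ ?_) ?_
    · exact (measurable_const.indicator hEm).comp measurable_fst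
    · exact (measurable_const.indicator hQm).comp (measurable_fst.sub measurable_snd)
    · exact (measurable_const.indicator hSm).comp measurable_snd
  have hES : ∀ᵐ x : Sp N, ¬ (x ∈ E ∩ S) := by
    rw [ae_iff]
    simpa only [not_not, Set.setOf_mem_eq] using hE0
  have hI : ∫⁻ x, ∫⁻ y, f x y = 0 := by
    have hae : ∀ᵐ x : Sp N, (∫⁻ y, f x y) = 0 := by
      filter_upwards [hkey, hES] with x hx hx2
      by_cases hxE : x ∈ E
      · have hxS : x ∉ S := fun h => hx2 ⟨hxE, h⟩
        have h0 : volume ({y | x - y ∈ Q} ∩ S) = 0 := hx hxS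
        have heq : (fun y => f x y) = ({y | x - y ∈ Q} ∩ S).indicator 1 := by
          funext y
          by_cases hy1 : x - y ∈ Q <;> by_cases hy2 : y ∈ S <;>
            simp [hf, Set.indicator_apply, hxE, hy1, hy2]
        rw [heq, lintegral_indicator_one ((smp_setmeas1 Q hQm x).inter hSm), h0]
      · have heq : (fun y => f x y) = fun _ => 0 := by
          funext y; simp [hf, Set.indicator_of_notMem hxE]
        rw [heq, lintegral_zero]
    rw [lintegral_congr_ae hae, lintegral_zero]
  have hswap : ∫⁻ y, ∫⁻ x, f x y = 0 := by
    rw [← lintegral_lintegral_swap hfm.aemeasurable]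
    exact hI
  have hinner : ∀ y : Sp N, (∫⁻ x, f x y)
      = S.indicator 1 y * volume (E ∩ {x | x - y ∈ Q}) := by
    intro y
    have heq : (fun x => f x y)
        = fun x => S.indicator 1 y * (E ∩ {x | x - y ∈ Q}).indicator 1 x := by
      funext x
      by_cases hx1 : x ∈ E <;> by_cases hx2 : x - y ∈ Q <;> by_cases hy : y ∈ S <;>
        simp [hf, Set.indicator_apply, hx1, hx2, hy, mul_comm]
    rw [heq, lintegral_const_mul (f := (E ∩ {x | x - y ∈ Q}).indicator 1) _
      (measurable_const.indicator (hEm.inter (smp_setmeas2 Q hQm y))),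
      lintegral_indicator_one (hEm.inter (smp_setmeas2 Q hQm y))]
  have hg : ∫⁻ y, S.indicator 1 y * volume (E ∩ {x | x - y ∈ Q}) = 0 := by
    rw [← lintegral_congr fun y => hinner y]
    exact hswap
  have hgm : Measurable fun y : Sp N => S.indicator 1 y * volume (E ∩ {x | x - y ∈ Q}) :=
    (measurable_const.indicator hSm).mul (smp_reach_meas E Q hEm hQm)
  have hae0 : ∀ᵐ y : Sp N, S.indicator 1 y * volume (E ∩ {x | x - y ∈ Q}) = 0 :=
    (lintegral_eq_zero_iff hgm).1 hg
  rw [← nonpos_iff_eq_zero]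
  refine le_trans (measure_mono ?_) (le_of_eq (ae_iff.1 hae0))
  rintro y ⟨hy1, hy2⟩
  simp only [Set.mem_setOf_eq]
  rw [Set.indicator_of_mem hy2, Pi.one_apply, one_mul]
  exact hy1.ne'



lemma smp_stepC {N : ℕ} (S Q : Set (Sp N)) (hSm : MeasurableSet S) (hQm : MeasurableSet Q)
    (hkey : ∀ᵐ x : Sp N, x ∉ S → volume ({y | x - y ∈ Q} ∩ S) = 0)
    (δ : ℝ) (c : ℝ≥0∞) (hc : 0 < c)
    (hst : ∀ w : Sp N, ‖w‖ < δ → c ≤ volume (Q ∩ {t | w - t ∈ Q}))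
    (E : Set (Sp N)) (hEm : MeasurableSet E) (hE0 : volume (E ∩ S) = 0) :
    volume ({y | 0 < volume (E ∩ ball y δ)} ∩ S) = 0 := by
  classical
  set E₁ := {z : Sp N | 0 < volume (E ∩ {x | x - z ∈ Q})} with hE₁
  have hE₁m : MeasurableSet E₁ :=
    measurableSet_lt measurable_const (smp_reach_meas E Q hEm hQm)
  have hE₁0 : volume (E₁ ∩ S) = 0 := smp_stepB S Q hSm hQm hkey E hEm hE0
  have hE₂0 : volume ({y | 0 < volume (E₁ ∩ {z | z - y ∈ Q})} ∩ S) = 0 :=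
    smp_stepB S Q hSm hQm hkey E₁ hE₁m hE₁0
  refine measure_mono_null ?_ hE₂0
  rintro y ⟨hy, hyS⟩
  simp only [Set.mem_setOf_eq] at hy
  refine ⟨?_, hyS⟩
  simp only [Set.mem_setOf_eq]
  by_contra h0
  rw [not_lt, nonpos_iff_eq_zero] at h0
  -- the double integral A
  set g : Sp N → Sp N → ℝ≥0∞ := fun z x =>
    Q.indicator 1 (z - y) * (E.indicator 1 x * Q.indicator 1 (x - z)) with hg
  have hgm : Measurable (Function.uncurry g) := by
    refine Measurable.mul ?_ (Measurable.mul ?_ ?_)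
    · exact (measurable_const.indicator hQm).comp (measurable_fst.sub measurable_const)
    · exact (measurable_const.indicator hEm).comp measurable_snd
    · exact (measurable_const.indicator hQm).comp (measurable_snd.sub measurable_fst)
  have hAform : ∀ z : Sp N, (∫⁻ x, g z x)
      = Q.indicator 1 (z - y) * volume (E ∩ {x | x - z ∈ Q}) := by
    intro z
    have heq : (fun x => g z x)
        = fun x => Q.indicator 1 (z - y) * (E ∩ {x | x - z ∈ Q}).indicator 1 x := by
      funext x
      by_cases h1 : x ∈ E <;> by_cases h2 : x - z ∈ Q <;>
        simp [hg, Set.indicator_apply, h1, h2]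
    rw [heq, lintegral_const_mul (f := (E ∩ {x | x - z ∈ Q}).indicator 1) _
      (measurable_const.indicator (hEm.inter (smp_setmeas2 Q hQm z))),
      lintegral_indicator_one (hEm.inter (smp_setmeas2 Q hQm z))]
  have hA0 : ∫⁻ z, ∫⁻ x, g z x = 0 := by
    have hnull : ∀ᵐ z : Sp N, z ∉ E₁ ∩ {z | z - y ∈ Q} := by
      rw [ae_iff]
      simpa only [not_not, Set.setOf_mem_eq] using h0
    have hae : ∀ᵐ z : Sp N, (∫⁻ x, g z x) = 0 := by
      filter_upwards [hnull] with z hz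
      rw [hAform z]
      by_cases h1 : z - y ∈ Q
      · have h2 : z ∉ E₁ := fun h => hz ⟨h, h1⟩
        rw [hE₁, Set.mem_setOf_eq, not_lt, nonpos_iff_eq_zero] at h2
        rw [h2, mul_zero]
      · rw [Set.indicator_of_notMem h1, zero_mul]
    rw [lintegral_congr_ae hae, lintegral_zero]
  -- swap and lower bound
  have hswap : ∫⁻ x, ∫⁻ z, g z x = 0 := by
    rw [← lintegral_lintegral_swap hgm.aemeasurable]
    exact hA0
  have hker : ∀ x : Sp N, (∫⁻ z, g z x)
      = E.indicator 1 x * volume ({z | z - y ∈ Q} ∩ {z | x - z ∈ Q}) := by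
    intro x
    have heq : (fun z => g z x)
        = fun z => E.indicator 1 x * ({z | z - y ∈ Q} ∩ {z | x - z ∈ Q}).indicator 1 z := by
      funext z
      by_cases h1 : z - y ∈ Q <;> by_cases h2 : x - z ∈ Q <;> by_cases h3 : x ∈ E <;>
        simp [hg, Set.indicator_apply, h1, h2, h3, mul_comm, mul_left_comm]
    rw [heq, lintegral_const_mul
      (f := ({z | z - y ∈ Q} ∩ {z | x - z ∈ Q}).indicator 1) _
      (measurable_const.indicator ((smp_setmeas2 Q hQm y).inter (smp_setmeas1 Q hQm x))),
      lintegral_indicator_one ((smp_setmeas2 Q hQm y).inter (smp_setmeas1 Q hQm x))]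
  have hlow : ∀ x : Sp N, x ∈ E ∩ ball y δ → c ≤ ∫⁻ z, g z x := by
    rintro x ⟨hxE, hxb⟩
    rw [hker x, Set.indicator_of_mem hxE, Pi.one_apply, one_mul]
    have htrans : volume ({z : Sp N | z - y ∈ Q} ∩ {z | x - z ∈ Q})
        = volume (Q ∩ {t : Sp N | (x - y) - t ∈ Q}) := by
      have hpre : {z : Sp N | z - y ∈ Q} ∩ {z | x - z ∈ Q}
          = (fun z : Sp N => z - y) ⁻¹' (Q ∩ {t : Sp N | (x - y) - t ∈ Q}) := by
        ext z
        simp only [Set.mem_inter_iff, Set.mem_setOf_eq, Set.mem_preimage]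
        constructor
        · rintro ⟨h1, h2⟩
          exact ⟨h1, by rwa [show x - y - (z - y) = x - z by abel]⟩
        · rintro ⟨h1, h2⟩
          rw [show x - y - (z - y) = x - z by abel] at h2
          exact ⟨h1, h2⟩
      rw [hpre]
      exact (measurePreserving_sub_right volume y).measure_preimage
        ((hQm.inter (smp_setmeas1 Q hQm (x - y))).nullMeasurableSet)
    rw [htrans]
    apply hst
    rw [← dist_eq_norm]
    exact mem_ball.1 hxb
  have hbig : c * volume (E ∩ ball y δ) ≤ ∫⁻ x, ∫⁻ z, g z x := by
    calc c * volume (E ∩ ball y δ)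
        = ∫⁻ x, (E ∩ ball y δ).indicator (fun _ => c) x := by
          rw [lintegral_indicator_const (hEm.inter measurableSet_ball)]
    _ ≤ ∫⁻ x, ∫⁻ z, g z x := by
          apply lintegral_mono
          intro x
          by_cases hx : x ∈ E ∩ ball y δ
          · rw [Set.indicator_of_mem hx]
            exact hlow x hx
          · rw [Set.indicator_of_notMem hx]
            exact zero_le
  rw [hswap] at hbig
  exact absurd (nonpos_iff_eq_zero.1 hbig) (ENNReal.mul_pos hc.ne' hy.ne').ne'


lemma smp_isOpenD {N : ℕ} (T : Set (Sp N)) (δ : ℝ) (hδ : 0 < δ) :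
    IsOpen {y : Sp N | 0 < volume (T ∩ ball y δ)} := by
  rw [Metric.isOpen_iff]
  intro y hy
  simp only [mem_setOf_eq] at hy
  have hcover : T ∩ ball y δ ⊆ ⋃ n : ℕ, T ∩ closedBall y (δ - δ / (n + 2)) := by
    rintro z ⟨hzT, hzb⟩
    rw [mem_ball] at hzb
    have hpos : 0 < δ - dist z y := sub_pos.2 hzb
    obtain ⟨n, hn⟩ := exists_nat_gt (δ / (δ - dist z y))
    refine mem_iUnion.2 ⟨n, hzT, ?_⟩
    rw [mem_closedBall]
    have h2 : δ / (δ - dist z y) < (n : ℝ) + 2 := hn.trans (by linarith)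
    have h2' : δ < ((n : ℝ) + 2) * (δ - dist z y) := (div_lt_iff₀ hpos).1 h2
    have h3 : δ / ((n : ℝ) + 2) < δ - dist z y :=
      (div_lt_iff₀ (by positivity)).2 (by nlinarith)
    linarith
  have hex : ∃ n : ℕ, 0 < volume (T ∩ closedBall y (δ - δ / (n + 2))) := by
    by_contra h
    push_neg at h
    have h0 : volume (⋃ n : ℕ, T ∩ closedBall y (δ - δ / (n + 2))) = 0 :=
      measure_iUnion_null fun n => nonpos_iff_eq_zero.1 (h n)
    exact hy.ne' (measure_mono_null hcover h0)
  obtain ⟨n, hn⟩ := hex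
  have hrpos : 0 < δ / ((n : ℝ) + 2) := by positivity
  refine ⟨δ / ((n : ℝ) + 2), hrpos, ?_⟩
  intro y' hy'
  simp only [mem_setOf_eq]
  refine hn.trans_le (measure_mono ?_)
  rintro z ⟨hzT, hzb⟩
  refine ⟨hzT, ?_⟩
  rw [mem_closedBall] at hzb
  rw [mem_ball] at hy' ⊢
  calc dist z y' ≤ dist z y + dist y y' := dist_triangle z y y'
  _ < (δ - δ / ((n : ℝ) + 2)) + δ / ((n : ℝ) + 2) := by
      have : dist y y' < δ / ((n : ℝ) + 2) := by rwa [dist_comm]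
      linarith
  _ = δ := by ring



/-- **Lemma 2.1 (Strong maximum principle).** For `0 ≤ m ≤ 2`, `a` continuous, `J ∈ L¹`
nonnegative, radially symmetric, with unit mass: any nonnegative bounded solution of (KPP)
a.e. is either positive a.e. or zero a.e. -/
theorem statement3 (N : ℕ) (hN : 1 ≤ N) (m : ℝ) (hm0 : 0 ≤ m) (hm2 : m ≤ 2) (ε : ℝ)
    (hε : 0 < ε) (a J : Sp N → ℝ) (hacont : Continuous a)
    (hJint : Integrable J) (hJpos : ∀ x, 0 ≤ J x)
    (hJrad : ∀ x y : Sp N, ‖x‖ = ‖y‖ → J x = J y) (hJmass : (∫ x, J x) = 1)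
    (u : Sp N → ℝ) (humeas : Measurable u) (hubdd : ∃ C, ∀ x, |u x| ≤ C)
    (hupos : ∀ᵐ x : Sp N, 0 ≤ u x) (husol : ∀ᵐ x : Sp N, kppEq N J a m ε u x) :
    (∀ᵐ x : Sp N, 0 < u x) ∨ (∀ᵐ x : Sp N, u x = 0) := by
  by_cases hpos : ∀ᵐ x : Sp N, 0 < u x
  · exact Or.inl hpos
  right
  classical
  set S : Set (Sp N) := {x | u x ≠ 0} with hSdef
  have hSm : MeasurableSet S := (humeas (measurableSet_singleton 0)).compl
  -- measurable version of J
  have hJaesm := hJint.aestronglyMeasurable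
  set Jm : Sp N → ℝ := hJaesm.mk J with hJmdef
  have hJmm : Measurable Jm := hJaesm.stronglyMeasurable_mk.measurable
  have hJae : J =ᵐ[volume] Jm := hJaesm.ae_eq_mk
  set P : Set (Sp N) := {z | Jm z ≠ 0 ∧ Jm (-z) ≠ 0} with hPdef
  have hPm : MeasurableSet P := by
    have h1 : MeasurableSet {z : Sp N | Jm z ≠ 0} :=
      (hJmm (measurableSet_singleton 0)).compl
    have h2 : MeasurableSet {z : Sp N | Jm (-z) ≠ 0} :=
      ((hJmm.comp measurable_neg) (measurableSet_singleton 0)).compl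
    exact h1.inter h2
  have hND : volume {z : Sp N | ¬ J z = Jm z} = 0 := ae_iff.1 hJae
  have hNDneg : volume {z : Sp N | ¬ J (-z) = Jm (-z)} = 0 := by
    have heq : {z : Sp N | ¬ J (-z) = Jm (-z)}
        = (fun z : Sp N => -z) ⁻¹' {z | ¬ J z = Jm z} := rfl
    rw [heq]
    exact (Measure.measurePreserving_neg
      (volume : Measure (Sp N))).quasiMeasurePreserving.preimage_null hND
  have hPpos : 0 < volume P := by
    by_contra h
    rw [not_lt, nonpos_iff_eq_zero] at h
    have hsub : {z : Sp N | ¬ J z = 0}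
        ⊆ P ∪ ({z | ¬ J z = Jm z} ∪ {z | ¬ J (-z) = Jm (-z)}) := by
      intro z hz
      by_cases h1 : J z = Jm z
      · by_cases h2 : J (-z) = Jm (-z)
        · left
          refine ⟨by rw [← h1]; exact hz, ?_⟩
          rw [← h2, hJrad (-z) z (by simp)]
          exact hz
        · right; right; exact h2
      · right; left; exact h1
    have hJ0 : volume {z : Sp N | ¬ J z = 0} = 0 := by
      refine measure_mono_null hsub ?_
      refine measure_union_null h (measure_union_null hND hNDneg)
    have hJz : ∀ᵐ z : Sp N, J z = 0 := ae_iff.2 hJ0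
    have := integral_eq_zero_of_ae hJz
    rw [hJmass] at this
    norm_num at this
  -- scaled symmetric kernel support
  set Pε : Set (Sp N) := (fun z : Sp N => ε⁻¹ • z) ⁻¹' P with hPε
  have hPεm : MeasurableSet Pε := hPm.preimage (measurable_const_smul _)
  have hPεpos : 0 < volume Pε := by
    rw [hPε, Measure.addHaar_preimage_smul volume (inv_ne_zero hε.ne') P]
    have hpow : (0:ℝ) < (ε⁻¹ ^ Module.finrank ℝ (Sp N))⁻¹ := by positivity
    exact ENNReal.mul_pos (ENNReal.ofReal_pos.2 (by rw [abs_of_pos hpow]; exact hpow)).ne'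
      hPpos.ne'
  have hcoverP : (⋃ n : ℕ, Pε ∩ ball 0 ((n:ℝ)+1)) = Pε := by
    ext z
    simp only [mem_iUnion, mem_inter_iff, mem_ball, dist_zero_right]
    constructor
    · rintro ⟨n, h, _⟩; exact h
    · intro h
      obtain ⟨n, hn⟩ := exists_nat_gt ‖z‖
      exact ⟨n, h, by linarith⟩
  have hexR : ∃ n : ℕ, 0 < volume (Pε ∩ ball 0 ((n:ℝ)+1)) := by
    by_contra h
    push_neg at h
    have h0 : volume Pε = 0 := by
      rw [← hcoverP]
      exact measure_iUnion_null fun n => nonpos_iff_eq_zero.1 (h n)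
    exact hPεpos.ne' h0
  obtain ⟨nR, hQpos⟩ := hexR
  set Q : Set (Sp N) := Pε ∩ ball 0 ((nR:ℝ)+1) with hQdef
  have hQm : MeasurableSet Q := hPεm.inter measurableSet_ball
  have hQfin : volume Q < ⊤ :=
    (measure_mono inter_subset_right).trans_lt measure_ball_lt_top
  have hPsym : ∀ z : Sp N, z ∈ P ↔ -z ∈ P := by
    intro z
    simp only [hPdef, mem_setOf_eq, neg_neg]
    tauto
  have hQsym : ∀ z : Sp N, z ∈ Q ↔ -z ∈ Q := by
    intro z
    simp only [hQdef, hPε, mem_inter_iff, mem_preimage, mem_ball, dist_zero_right, norm_neg,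
      smul_neg]
    constructor
    · rintro ⟨h1, h2⟩
      exact ⟨(hPsym _).1 h1, h2⟩
    · rintro ⟨h1, h2⟩
      exact ⟨by simpa [neg_neg] using (hPsym _).1 h1, h2⟩
  -- the key dichotomy property from the equation
  have hεm : (1 : ℝ) / ε ^ m ≠ 0 := one_div_ne_zero (Real.rpow_pos_of_pos hε m).ne'
  have hkey : ∀ᵐ x : Sp N, x ∉ S → volume ({y | x - y ∈ Q} ∩ S) = 0 := by
    filter_upwards [husol] with x hx hxS
    have hux : u x = 0 := not_not.1 hxS
    have hconv : convJ N J ε u x = 0 := by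
      have heq := hx
      rw [kppEq, hux] at heq
      simp only [sub_zero, zero_mul, add_zero] at heq
      exact (mul_eq_zero.1 heq).resolve_left hεm
    have h1 : Integrable (fun z : Sp N => J (ε⁻¹ • z)) :=
      (integrable_comp_smul_iff volume J (inv_ne_zero hε.ne')).2 hJint
    have h2 : Integrable (fun y : Sp N => J (ε⁻¹ • (x - y))) := h1.comp_sub_left x
    have h3 : Integrable (fun y : Sp N => u y * J (ε⁻¹ • (x - y))) := by
      obtain ⟨C, hC⟩ := hubdd
      refine h2.bdd_mul (c := C) humeas.aestronglyMeasurable ?_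
      exact Eventually.of_forall fun y => by rw [Real.norm_eq_abs]; exact hC y
    have hgint : Integrable (fun y : Sp N => Jresc N J ε (x - y) * u y) := by
      refine ((h3.const_mul (1 / ε ^ N)).congr (Eventually.of_forall fun y => ?_))
      simp only [Jresc]
      ring
    have hg0 : ∀ᵐ y : Sp N, 0 ≤ Jresc N J ε (x - y) * u y := by
      filter_upwards [hupos] with y hy
      exact mul_nonneg (mul_nonneg (by positivity) (hJpos _)) hy
    have hgz : ∀ᵐ y : Sp N, Jresc N J ε (x - y) * u y = 0 :=
      (integral_eq_zero_iff_of_nonneg_ae hg0 hgint).1 hconv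
    have hmp : ∀ᵐ y : Sp N, J (ε⁻¹ • (x - y)) = Jm (ε⁻¹ • (x - y)) := by
      rw [ae_iff]
      have hset : {y : Sp N | ¬ J (ε⁻¹ • (x - y)) = Jm (ε⁻¹ • (x - y))}
          = (fun y : Sp N => x - y) ⁻¹' ((fun z : Sp N => ε⁻¹ • z) ⁻¹' {z | ¬ J z = Jm z}) :=
        rfl
      rw [hset]
      refine (Measure.measurePreserving_sub_left volume x).quasiMeasurePreserving.preimage_null ?_
      rw [Measure.addHaar_preimage_smul volume (inv_ne_zero hε.ne'), hND, mul_zero]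
    have hfinal : ∀ᵐ y : Sp N, ¬ (y ∈ {y | x - y ∈ Q} ∩ S) := by
      filter_upwards [hgz, hmp] with y h1' h2'
      rintro ⟨hyQ, hyS⟩
      have hPmem : ε⁻¹ • (x - y) ∈ P := hyQ.1
      have hJne : J (ε⁻¹ • (x - y)) ≠ 0 := by rw [h2']; exact hPmem.1
      have huy : u y = 0 := by
        have h3' : 1 / ε ^ N * J (ε⁻¹ • (x - y)) * u y = 0 := h1'
        rcases mul_eq_zero.1 h3' with h4 | h4
        · rcases mul_eq_zero.1 h4 with h5 | h5
          · exact absurd h5 (by positivity)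
          · exact absurd h5 hJne
        · exact h4
      exact hyS huy
    have := ae_iff.1 hfinal
    simpa only [not_not, Set.setOf_mem_eq] using this
  -- Steinhaus constants
  obtain ⟨δ, hδpos, c, hcpos, hst⟩ := smp_steinhaus Q hQm hQpos hQfin hQsym
  -- starting set
  set E : Set (Sp N) := {x | u x = 0} with hEdef
  have hEm : MeasurableSet E := humeas (measurableSet_singleton 0)
  have hES : volume (E ∩ S) = 0 := by
    have : E ∩ S = ∅ := by
      ext x
      simp only [hEdef, hSdef, mem_inter_iff, mem_setOf_eq, mem_empty_iff_false, iff_false,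
        not_and]
      exact fun h => not_not.2 h
    rw [this, measure_empty]
  have hEpos : 0 < volume E := by
    by_contra h
    rw [not_lt, nonpos_iff_eq_zero] at h
    refine hpos ?_
    have h1 : volume {x : Sp N | ¬ 0 ≤ u x} = 0 := ae_iff.1 hupos
    rw [ae_iff]
    refine measure_mono_null ?_ (measure_union_null h h1)
    intro x hx
    simp only [mem_setOf_eq, not_lt] at hx
    by_cases h2 : 0 ≤ u x
    · exact Or.inl (le_antisymm hx h2)
    · exact Or.inr h2
  -- iteration
  set D : Set (Sp N) → Set (Sp N) := fun T => {y | 0 < volume (T ∩ ball y δ)} with hD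
  set A : ℕ → Set (Sp N) := fun n => D^[n] E with hA
  have hAsucc : ∀ n, A (n+1) = D (A n) := fun n => Function.iterate_succ_apply' D n E
  have hAopen : ∀ n, IsOpen (A (n+1)) := by
    intro n
    rw [hAsucc]
    exact smp_isOpenD (A n) δ hδpos
  have hAzero : ∀ n, MeasurableSet (A n) ∧ volume (A n ∩ S) = 0 := by
    intro n
    induction n with
    | zero => exact ⟨hEm, hES⟩
    | succ k ih =>
      refine ⟨(hAopen k).measurableSet, ?_⟩
      rw [hAsucc]
      exact smp_stepC S Q hSm hQm hkey δ c hcpos hst (A k) ih.1 ih.2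
  -- starting point
  have hstart : ∃ y₀ : Sp N, y₀ ∈ A 1 := by
    obtain ⟨Dset, hDc, hDd⟩ := TopologicalSpace.exists_countable_dense (Sp N)
    by_contra h
    push_neg at h
    have hz : ∀ q : Sp N, volume (E ∩ ball q δ) = 0 := by
      intro q
      have hq := h q
      rw [hAsucc 0] at hq
      simp only [hD, mem_setOf_eq, not_lt, nonpos_iff_eq_zero] at hq
      exact hq
    have hcovE : E ⊆ ⋃ q ∈ Dset, E ∩ ball q δ := by
      intro x hx
      obtain ⟨q, hq, hdq⟩ := hDd.exists_dist_lt x hδpos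
      exact mem_biUnion hq ⟨hx, mem_ball.2 hdq⟩
    exact hEpos.ne'
      (measure_mono_null hcovE ((measure_biUnion_null_iff hDc).2 fun q _ => hz q))
  obtain ⟨y₀, hy₀⟩ := hstart
  -- coverage by induction
  have hcovA : ∀ n : ℕ, ∀ y : Sp N, dist y y₀ ≤ n * (δ/2) → y ∈ A (n+1) := by
    intro n
    induction n with
    | zero =>
      intro y hy
      simp only [Nat.cast_zero, zero_mul] at hy
      have : y = y₀ := dist_le_zero.1 hy
      rwa [this]
    | succ k ih =>
      intro y hy
      by_cases hcase : dist y y₀ ≤ k * (δ/2)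
      · have hyk := ih y hcase
        rw [hAsucc (k+1)]
        show 0 < volume (A (k+1) ∩ ball y δ)
        exact ((hAopen k).inter isOpen_ball).measure_pos volume
          ⟨y, hyk, mem_ball_self hδpos⟩
      · push_neg at hcase
        have hdpos : 0 < dist y y₀ := lt_of_le_of_lt (by positivity) hcase
        set t : ℝ := (k * (δ/2)) / dist y y₀ with ht
        have ht0 : 0 ≤ t := by positivity
        have ht1 : t < 1 := (div_lt_one hdpos).2 hcase
        set y' : Sp N := y₀ + t • (y - y₀) with hy'd
        have hsub1 : y' - y₀ = t • (y - y₀) := by rw [hy'd]; abel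
        have hd1 : dist y' y₀ = k * (δ/2) := by
          rw [dist_eq_norm, hsub1, norm_smul, Real.norm_eq_abs, abs_of_nonneg ht0,
            ← dist_eq_norm]
          field_simp [ht]
          rw [ht, div_mul_cancel₀ _ hdpos.ne']; ring
        have hsub2 : y - y' = (1 - t) • (y - y₀) := by
          rw [hy'd, sub_smul, one_smul]
          abel
        have hd2 : dist y y' < δ := by
          rw [dist_eq_norm, hsub2, norm_smul, Real.norm_eq_abs, abs_of_nonneg (by linarith),
            ← dist_eq_norm]
          have hne : (1 - t) * dist y y₀ = dist y y₀ - k * (δ/2) := by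
            field_simp [ht]
            rw [sub_mul, div_mul_cancel₀ _ hdpos.ne']; ring
          rw [hne]
          have hcast : ((k+1 : ℕ) : ℝ) * (δ/2) = k * (δ/2) + δ/2 := by push_cast; ring
          rw [hcast] at hy
          linarith
        have hy'k := ih y' (le_of_eq hd1)
        rw [hAsucc (k+1)]
        show 0 < volume (A (k+1) ∩ ball y δ)
        exact ((hAopen k).inter isOpen_ball).measure_pos volume
          ⟨y', hy'k, by rw [mem_ball, dist_comm]; exact hd2⟩
  -- conclusion
  have hSnull : volume S = 0 := by
    have hsub : S ⊆ ⋃ n : ℕ, (A (n+1) ∩ S) := by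
      intro y hyS
      obtain ⟨n, hn⟩ := exists_nat_ge (dist y y₀ / (δ/2))
      have hd : dist y y₀ ≤ n * (δ/2) := by
        rw [div_le_iff₀ (by positivity)] at hn
        linarith
      exact mem_iUnion.2 ⟨n, hcovA n y hd, hyS⟩
    exact measure_mono_null hsub (measure_iUnion_null fun n => (hAzero (n+1)).2)
  rw [ae_iff]
  exact hSnull
end
end

section
/- (Construction of sub-solutions.) Let N ≥ 1, 0 ≤ m < 2, let a satisfy assumption (1.1) and let J satisfy assumption (1.4). Then, for every θ ∈ (0,1) and every z ∈ supp(a⁺) := {x : a⁺(x) ≠ 0}, there exist an open neighborhood V of z with V ⊂ supp(a⁺), a number ε_{z,θ} > 0, and a nonnegative function u ∈ C_c(ℝ^N) such that: supp(u) = V (set-theoretically, {x : u(x) ≠ 0} = V), u(z) ≥ (1 − θ) a⁺(z), u(x) < a⁺(x) for all x ∈ V, and u is a sub-solution of (KPP) for every 0 < ε < ε_{z,θ}, i.e. ε^{−m}(J_ε ∗ u − u)(x) + u(x)(a(x) − u(x)) ≥ 0 for all x ∈ ℝ^N. -/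
/-!
Take `u = δ ∏ᵢ cos⁺(l (xᵢ - zᵢ))` with `δ = (1 - θ) a(z)`: a tensorised cosine arch supported in a
cube around `z` so small that `a > (1 - θ/2) a(z)` there, whence `a - u > θ a(z)/2` on the support.
Since `J` is radial, `J_ε ∗ u` may be averaged over the coordinate reflections, and the identity
`cos (l(t+s)) + cos (l(t-s)) = 2 cos (lt) cos (ls)`, applied coordinatewise, gives
`J_ε ∗ u ≥ u (1 - ∫ J(v) min((lε|v|)², 1) dv)`. As `min(s², 1) ≤ s^m` and `m < 2`, dominated
convergence makes this deficit `o(ε^m)`, so for small `ε` the diffusion term is at least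
`-θ a(z) u / 2`, which the reaction term `u (a - u)` compensates.
-/

open MeasureTheory Filter Metric Set

noncomputable section

open Real Topology

section CosBump

def cosBump (l t : ℝ) : ℝ := cos (min |l * t| (π / 2))

variable {l t : ℝ}

lemma continuous_cosBump (l : ℝ) : Continuous (cosBump l) := by
  unfold cosBump; fun_prop

lemma cosBump_nonneg (l t : ℝ) : 0 ≤ cosBump l t := by
  have : 0 ≤ min |l * t| (π / 2) := le_min (abs_nonneg _) (by positivity)
  exact cos_nonneg_of_mem_Icc ⟨by linarith [pi_pos], min_le_right _ _⟩

lemma cosBump_le_one (l t : ℝ) : cosBump l t ≤ 1 := cos_le_one _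

@[simp] lemma cosBump_zero (l : ℝ) : cosBump l 0 = 1 := by
  simp [cosBump, min_eq_left (by positivity : (0 : ℝ) ≤ π / 2)]

lemma cosBump_of_abs_le (h : |l * t| ≤ π / 2) : cosBump l t = cos (l * t) := by
  rw [cosBump, min_eq_left h, cos_abs]

lemma cosBump_of_le_abs (h : π / 2 ≤ |l * t|) : cosBump l t = 0 := by
  rw [cosBump, min_eq_right h, cos_pi_div_two]

lemma cosBump_pos_iff : 0 < cosBump l t ↔ |l * t| < π / 2 := by
  refine ⟨fun h => not_le.1 fun h' => h.ne' (cosBump_of_le_abs h'), fun h => ?_⟩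
  rw [cosBump_of_abs_le h.le, ← cos_abs]
  exact cos_pos_of_mem_Ioo ⟨by linarith [abs_nonneg (l * t), pi_pos], h⟩

lemma cos_le_cosBump (h : |l * t| ≤ π) : cos (l * t) ≤ cosBump l t := by
  rw [cosBump, ← cos_abs (l * t)]
  exact cos_le_cos_of_nonneg_of_le_pi (le_min (abs_nonneg _) (by positivity)) h (min_le_left _ _)

lemma two_mul_cosBump_mul_cos_le {s : ℝ} (hs : |l * s| ≤ π / 2) :
    2 * cosBump l t * cos (l * s) ≤ cosBump l (t + s) + cosBump l (t - s) := by
  rcases le_or_gt (π / 2) |l * t| with ht | ht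
  · rw [cosBump_of_le_abs ht]
    linarith [cosBump_nonneg l (t + s), cosBump_nonneg l (t - s)]
  have hsum : |l * (t + s)| ≤ π := by
    rw [mul_add]; linarith [abs_add_le (l * t) (l * s)]
  have hdiff : |l * (t - s)| ≤ π := by
    rw [mul_sub]; linarith [abs_sub (l * t) (l * s)]
  calc 2 * cosBump l t * cos (l * s) = cos (l * (t + s)) + cos (l * (t - s)) := by
        rw [cosBump_of_abs_le ht.le, mul_add, mul_sub, cos_add, cos_sub]; ring
    _ ≤ cosBump l (t + s) + cosBump l (t - s) :=
        add_le_add (cos_le_cosBump hsum) (cos_le_cosBump hdiff)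

end CosBump

lemma Finset.one_sub_sum_one_sub_le_prod {ι : Type*} (s : Finset ι) {f : ι → ℝ}
    (h0 : ∀ i ∈ s, 0 ≤ f i) (h1 : ∀ i ∈ s, f i ≤ 1) :
    1 - ∑ i ∈ s, (1 - f i) ≤ ∏ i ∈ s, f i := by
  induction s using Finset.cons_induction with
  | empty => simp
  | cons a s ha ih =>
    simp only [Finset.mem_cons, forall_eq_or_imp] at h0 h1
    rw [Finset.prod_cons, Finset.sum_cons]
    have hprod : 0 ≤ ∏ i ∈ s, f i := Finset.prod_nonneg h0.2
    have hsum : 0 ≤ ∑ i ∈ s, (1 - f i) := Finset.sum_nonneg fun i hi => by linarith [h1.2 i hi]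
    nlinarith [mul_le_mul_of_nonneg_left (ih h0.2 h1.2) h0.1]

section CubeBump

variable {ι : Type*} [Fintype ι]

lemma EuclideanSpace.one_sub_norm_sq_div_two_le_prod_cos (v : EuclideanSpace ℝ ι)
    (hv : ‖v‖ ≤ π / 2) : 1 - ‖v‖ ^ 2 / 2 ≤ ∏ i, cos (v i) := by
  have hcos : ∀ i, 0 ≤ cos (v i) := fun i => cos_nonneg_of_mem_Icc
    (abs_le.1 ((Real.norm_eq_abs (v i)).symm ▸ (PiLp.norm_apply_le v i).trans hv))
  calc 1 - ‖v‖ ^ 2 / 2 = 1 - ∑ i, (v i) ^ 2 / 2 := by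
        rw [EuclideanSpace.real_norm_sq_eq, Finset.sum_div]
    _ ≤ 1 - ∑ i, (1 - cos (v i)) := by
        gcongr with i; linarith [one_sub_sq_div_two_le_cos (x := v i)]
    _ ≤ ∏ i, cos (v i) :=
        Finset.univ.one_sub_sum_one_sub_le_prod (fun i _ => hcos i) (fun i _ => cos_le_one _)

def coordReflection (σ : ι → Bool) : EuclideanSpace ℝ ι ≃ₗᵢ[ℝ] EuclideanSpace ℝ ι :=
  LinearIsometryEquiv.piLpCongrRight 2
    fun i => if σ i then LinearIsometryEquiv.neg ℝ else LinearIsometryEquiv.refl ℝ ℝ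

lemma coordReflection_apply (σ : ι → Bool) (w : EuclideanSpace ℝ ι) (i : ι) :
    coordReflection σ w i = if σ i then -w i else w i := by
  rw [coordReflection, LinearIsometryEquiv.piLpCongrRight_apply]
  by_cases h : σ i <;> simp [h]

def cubeBump (l : ℝ) (z x : EuclideanSpace ℝ ι) : ℝ := ∏ i, cosBump l (x i - z i)

lemma continuous_cubeBump (l : ℝ) (z : EuclideanSpace ℝ ι) : Continuous (cubeBump l z) :=
  continuous_finsetProd _ fun i _ =>
    (continuous_cosBump l).comp ((PiLp.continuous_apply 2 _ i).sub continuous_const)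

lemma cubeBump_nonneg (l : ℝ) (z x : EuclideanSpace ℝ ι) : 0 ≤ cubeBump l z x :=
  Finset.prod_nonneg fun _ _ => cosBump_nonneg l _

lemma cubeBump_le_one (l : ℝ) (z x : EuclideanSpace ℝ ι) : cubeBump l z x ≤ 1 :=
  Finset.prod_le_one (fun _ _ => cosBump_nonneg l _) fun _ _ => cosBump_le_one l _

@[simp] lemma cubeBump_self (l : ℝ) (z : EuclideanSpace ℝ ι) : cubeBump l z z = 1 := by
  simp [cubeBump]

lemma cubeBump_ne_zero_iff {l : ℝ} {z x : EuclideanSpace ℝ ι} :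
    cubeBump l z x ≠ 0 ↔ ∀ i, |l * (x i - z i)| < π / 2 := by
  rw [cubeBump, Finset.prod_ne_zero_iff]
  simp only [Finset.mem_univ, true_implies]
  exact forall_congr' fun i => (cosBump_nonneg _ _).lt_iff_ne'.symm.trans cosBump_pos_iff

lemma norm_sq_mul_sq_le_of_cubeBump_ne_zero {l : ℝ} {z x : EuclideanSpace ℝ ι}
    (h : cubeBump l z x ≠ 0) : (l * ‖x - z‖) ^ 2 ≤ Fintype.card ι * (π / 2) ^ 2 := by
  calc (l * ‖x - z‖) ^ 2 = ∑ i, |l * (x i - z i)| ^ 2 := by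
        simp only [mul_pow, EuclideanSpace.real_norm_sq_eq, Finset.mul_sum, sq_abs, PiLp.sub_apply]
    _ ≤ ∑ _i : ι, (π / 2) ^ 2 := by
        gcongr with i; exact (cubeBump_ne_zero_iff.1 h i).le
    _ = Fintype.card ι * (π / 2) ^ 2 := by simp

lemma sum_cubeBump_sub_coordReflection [DecidableEq ι] (l : ℝ) (z x w : EuclideanSpace ℝ ι) :
    ∑ σ : ι → Bool, cubeBump l z (x - coordReflection σ w) =
      ∏ i, (cosBump l (x i - z i + w i) + cosBump l (x i - z i - w i)) := by
  have hbool : ∀ i, cosBump l (x i - z i + w i) + cosBump l (x i - z i - w i) =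
      ∑ b : Bool, cosBump l (x i - (if b then -w i else w i) - z i) := fun i => by
    simp only [Fintype.sum_bool, if_true, Bool.false_eq_true, if_false]; ring_nf
  rw [Finset.prod_congr rfl fun i _ => hbool i, Fintype.prod_sum]
  refine Finset.sum_congr rfl fun σ _ => Finset.prod_congr rfl fun i _ => ?_
  rw [PiLp.sub_apply, coordReflection_apply]

lemma two_pow_mul_cubeBump_le_sum_reflection [DecidableEq ι] (l : ℝ)
    (z x w : EuclideanSpace ℝ ι) :
    2 ^ Fintype.card ι * cubeBump l z x * (1 - min ((l * ‖w‖) ^ 2) 1) ≤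
      ∑ σ : ι → Bool, cubeBump l z (x - coordReflection σ w) := by
  rcases le_or_gt 1 ((l * ‖w‖) ^ 2) with hw | hw
  · simpa [min_eq_right hw] using Finset.sum_nonneg fun σ _ => cubeBump_nonneg l z (x - _)
  have hsq : ‖l • w‖ ^ 2 = (l * ‖w‖) ^ 2 := by
    rw [norm_smul, Real.norm_eq_abs, mul_pow, sq_abs, mul_pow]
  have hlw : ‖l • w‖ ≤ 1 := by
    rw [← sq_le_one_iff₀ (norm_nonneg _), hsq]; exact hw.le
  have hcoord : ∀ i, |l * w i| ≤ π / 2 := fun i => by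
    have := (PiLp.norm_apply_le (l • w) i).trans hlw
    rw [PiLp.smul_apply, smul_eq_mul, Real.norm_eq_abs] at this
    linarith [pi_gt_three]
  have hbump := cubeBump_nonneg l z x
  calc 2 ^ Fintype.card ι * cubeBump l z x * (1 - min ((l * ‖w‖) ^ 2) 1)
      ≤ 2 ^ Fintype.card ι * cubeBump l z x * (1 - ‖l • w‖ ^ 2 / 2) := by
        rw [min_eq_left hw.le, hsq]; gcongr; linarith [sq_nonneg (l * ‖w‖)]
    _ ≤ 2 ^ Fintype.card ι * cubeBump l z x * ∏ i, cos ((l • w) i) := by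
        gcongr
        exact (l • w).one_sub_norm_sq_div_two_le_prod_cos (hlw.trans (by linarith [pi_gt_three]))
    _ = ∏ i, 2 * cosBump l (x i - z i) * cos (l * w i) := by
        simp [cubeBump, Finset.prod_mul_distrib]
    _ ≤ ∏ i, (cosBump l ((x i - z i) + w i) + cosBump l ((x i - z i) - w i)) :=
        Finset.prod_le_prod (fun i _ => mul_nonneg (mul_nonneg zero_le_two (cosBump_nonneg l _))
          (cos_nonneg_of_mem_Icc (abs_le.1 (hcoord i))))
          fun i _ => two_mul_cosBump_mul_cos_le (hcoord i)
    _ = _ := (sum_cubeBump_sub_coordReflection l z x w).symm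

lemma exists_support_cubeBump_subset_ball (z : EuclideanSpace ℝ ι) {r : ℝ} (hr : 0 < r) :
    ∃ l, {x | cubeBump l z x ≠ 0} ⊆ ball z r := by
  refine ⟨π * (Fintype.card ι + 1) / r, fun x hx => ?_⟩
  have hsq := norm_sq_mul_sq_le_of_cubeBump_ne_zero hx
  rw [mem_ball, dist_eq_norm]
  by_contra! hxr
  have hlr : π * (Fintype.card ι + 1) ≤ π * (Fintype.card ι + 1) / r * ‖x - z‖ := by
    rw [div_mul_eq_mul_div, le_div_iff₀ hr]; gcongr
  have : (π * (Fintype.card ι + 1)) ^ 2 ≤ Fintype.card ι * (π / 2) ^ 2 :=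
    (pow_le_pow_left₀ (by positivity) hlr 2).trans hsq
  nlinarith [pi_pos, (Fintype.card ι).cast_nonneg (α := ℝ)]

end CubeBump

section Convolution

variable {N : ℕ} {J : Sp N → ℝ}

lemma convJ_eq_integral_smul {ε : ℝ} (hε : 0 < ε) (u : Sp N → ℝ) (x : Sp N) :
    convJ N J ε u x = ∫ v, J v * u (x - ε • v) := by
  have hscale := Measure.integral_comp_inv_smul_of_nonneg volume
    (fun v => J v * u (x - ε • v)) hε.le
  simp only [smul_smul, mul_inv_cancel₀ hε.ne', one_smul, finrank_euclideanSpace_fin,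
    smul_eq_mul] at hscale
  rw [convJ, ← integral_sub_left_eq_self _ volume x]
  simp only [Jresc, sub_sub_cancel, mul_assoc, integral_const_mul, hscale]
  field_simp

lemma integral_mul_comp_linearIsometryEquiv {E : Type*} [NormedAddCommGroup E]
    [InnerProductSpace ℝ E] [FiniteDimensional ℝ E] [MeasurableSpace E] [BorelSpace E]
    {J : E → ℝ} (hJ : ∀ x y, ‖x‖ = ‖y‖ → J x = J y) (L : E ≃ₗᵢ[ℝ] E) (f : E → ℝ) :
    ∫ v, J v * f (L v) = ∫ v, J v * f v := by
  rw [← integral_comp L fun v => J v * f v]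
  simp_rw [hJ (L _) _ (L.norm_map _)]

lemma mul_one_sub_integral_le_convJ (hJint : Integrable J) (hJnn : ∀ v, 0 ≤ J v)
    (hJrad : ∀ x y : Sp N, ‖x‖ = ‖y‖ → J x = J y) (hJmass : ∫ v, J v = 1)
    {u : Sp N → ℝ} (hu : Continuous u) (hus : HasCompactSupport u)
    {ψ : Sp N → ℝ} (hψ : Continuous ψ) (hψb : ∀ w, |ψ w| ≤ 1) {x : Sp N}
    (hx : ∀ w, 2 ^ N * u x * (1 - ψ w) ≤ ∑ σ : Fin N → Bool, u (x - coordReflection σ w))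
    {ε : ℝ} (hε : 0 < ε) :
    u x * (1 - ∫ v, J v * ψ (ε • v)) ≤ convJ N J ε u x := by
  obtain ⟨C, hC⟩ := hu.bounded_above_of_compact_support hus
  have hint : ∀ σ : Fin N → Bool, Integrable fun v => J v * u (x - ε • coordReflection σ v) :=
    fun σ => hJint.mul_bdd (by fun_prop) (Eventually.of_forall fun v => hC _)
  have hJψ : Integrable fun v => J v * ψ (ε • v) :=
    hJint.mul_bdd (by fun_prop) (Eventually.of_forall fun v => hψb _)
  have hreflect : ∀ σ : Fin N → Bool,
      ∫ v, J v * u (x - ε • coordReflection σ v) = convJ N J ε u x := fun σ => by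
    rw [convJ_eq_integral_smul hε,
      integral_mul_comp_linearIsometryEquiv hJrad _ fun v => u (x - ε • v)]
  refine le_of_mul_le_mul_left ?_ (by positivity : (0 : ℝ) < 2 ^ N)
  calc 2 ^ N * (u x * (1 - ∫ v, J v * ψ (ε • v)))
      = ∫ v, 2 ^ N * u x * (J v - J v * ψ (ε • v)) := by
        rw [integral_const_mul, integral_sub hJint hJψ, hJmass]; ring
    _ ≤ ∫ v, ∑ σ : Fin N → Bool, J v * u (x - ε • coordReflection σ v) := by
        refine integral_mono ((hJint.sub hJψ).const_mul _)
          (integrable_finsetSum _ fun σ _ => hint σ) fun v => ?_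
        simp only [← Finset.mul_sum, ← map_smul]
        nlinarith [mul_le_mul_of_nonneg_left (hx (ε • v)) (hJnn v)]
    _ = 2 ^ N * convJ N J ε u x := by
        simp [integral_finsetSum _ fun σ _ => hint σ, hreflect]

lemma mul_cubeBump_mul_one_sub_integral_le_convJ (hJint : Integrable J)
    (hJnn : ∀ v, 0 ≤ J v) (hJrad : ∀ x y : Sp N, ‖x‖ = ‖y‖ → J x = J y)
    (hJmass : ∫ v, J v = 1) {δ : ℝ} (hδ : 0 ≤ δ) (l : ℝ) (z x : Sp N)
    (hus : HasCompactSupport fun y => δ * cubeBump l z y) {ε : ℝ} (hε : 0 < ε) :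
    δ * cubeBump l z x * (1 - ∫ v, J v * min ((l * ‖ε • v‖) ^ 2) 1) ≤
      convJ N J ε (fun y => δ * cubeBump l z y) x := by
  refine mul_one_sub_integral_le_convJ hJint hJnn hJrad hJmass
    (continuous_const.mul (continuous_cubeBump l z)) hus (ψ := fun w => min ((l * ‖w‖) ^ 2) 1)
    (by fun_prop) (fun w => abs_le.2 ⟨by linarith [le_min (sq_nonneg (l * ‖w‖)) zero_le_one],
      min_le_right _ _⟩) (fun w => ?_) hε
  calc 2 ^ N * (δ * cubeBump l z x) * (1 - min ((l * ‖w‖) ^ 2) 1)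
      = δ * (2 ^ Fintype.card (Fin N) * cubeBump l z x * (1 - min ((l * ‖w‖) ^ 2) 1)) := by
        rw [Fintype.card_fin]; ring
    _ ≤ δ * ∑ σ : Fin N → Bool, cubeBump l z (x - coordReflection σ w) :=
        mul_le_mul_of_nonneg_left (two_pow_mul_cubeBump_le_sum_reflection l z x w) hδ
    _ = _ := Finset.mul_sum _ _ _

end Convolution

lemma min_sq_one_le_rpow {s m : ℝ} (hs : 0 ≤ s) (hm0 : 0 ≤ m) (hm2 : m ≤ 2) :
    min (s ^ 2) 1 ≤ s ^ m := by
  rcases le_or_gt s 1 with hs1 | hs1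
  · calc min (s ^ 2) 1 ≤ s ^ (2 : ℝ) := by rw [rpow_two]; exact min_le_left _ _
      _ ≤ s ^ m := rpow_le_rpow_of_exponent_ge' hs hs1 hm0 hm2
  · exact (min_le_right _ _).trans (one_le_rpow hs1.le hm0)

lemma tendsto_integral_mul_min_sq_div_rpow {E : Type*} [NormedAddCommGroup E] [NormedSpace ℝ E]
    [MeasurableSpace E] [OpensMeasurableSpace E] {μ : Measure E} {J : E → ℝ}
    (hJ : AEStronglyMeasurable J μ) (hJnn : ∀ v, 0 ≤ J v) {m : ℝ} (hm0 : 0 ≤ m) (hm2 : m < 2)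
    (hmom : Integrable (fun v => J v * ‖v‖ ^ m) μ) (l : ℝ) :
    Tendsto (fun ε : ℝ => (∫ v, J v * min ((l * ‖ε • v‖) ^ 2) 1 ∂μ) / ε ^ m)
      (𝓝[>] 0) (𝓝 0) := by
  have hmeas : ∀ ε : ℝ, AEStronglyMeasurable (fun v => J v * min ((l * ‖ε • v‖) ^ 2) 1 / ε ^ m) μ :=
    fun ε => by
      have hψ : Continuous fun v : E => min ((l * ‖ε • v‖) ^ 2) 1 := by fun_prop
      simp_rw [div_eq_mul_inv]
      exact (hJ.mul hψ.aestronglyMeasurable).mul_const _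
  have key := tendsto_integral_filter_of_dominated_convergence (l := 𝓝[>] (0 : ℝ))
    (F := fun ε v => J v * min ((l * ‖ε • v‖) ^ 2) 1 / ε ^ m) (f := fun _ => 0)
    (fun v => |l| ^ m * (J v * ‖v‖ ^ m)) (Eventually.of_forall hmeas) ?_ (hmom.const_mul _) ?_
  · simpa only [integral_div, integral_zero] using key
  · filter_upwards [self_mem_nhdsWithin] with ε (hε : 0 < ε)
    refine Eventually.of_forall fun v => ?_
    have hmin : min ((l * ‖ε • v‖) ^ 2) 1 ≤ |l| ^ m * (ε ^ m * ‖v‖ ^ m) := by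
      rw [← mul_rpow hε.le (norm_nonneg v), ← mul_rpow (abs_nonneg l) (by positivity), ← sq_abs,
        abs_mul, norm_smul, Real.norm_of_nonneg hε.le, abs_of_nonneg (by positivity : 0 ≤ ε * ‖v‖)]
      exact min_sq_one_le_rpow (by positivity) hm0 hm2.le
    rw [Real.norm_of_nonneg (by positivity [hJnn v]), div_le_iff₀ (by positivity)]
    calc J v * min ((l * ‖ε • v‖) ^ 2) 1 ≤ J v * (|l| ^ m * (ε ^ m * ‖v‖ ^ m)) :=
          mul_le_mul_of_nonneg_left hmin (hJnn v)
      _ = |l| ^ m * (J v * ‖v‖ ^ m) * ε ^ m := by ring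
  · refine Eventually.of_forall fun v => ?_
    have hbound : Tendsto (fun ε : ℝ => J v * (l * ‖v‖) ^ 2 * ε ^ (2 - m)) (𝓝[>] 0) (𝓝 0) := by
      have := ((continuous_rpow_const (sub_nonneg.2 hm2.le)).tendsto 0).const_mul
        (J v * (l * ‖v‖) ^ 2)
      rw [zero_rpow (sub_ne_zero.2 hm2.ne'), mul_zero] at this
      exact this.mono_left nhdsWithin_le_nhds
    refine tendsto_of_tendsto_of_tendsto_of_le_of_le' tendsto_const_nhds hbound ?_ ?_
    · filter_upwards [self_mem_nhdsWithin] with ε (hε : 0 < ε)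
      exact div_nonneg (mul_nonneg (hJnn v) (le_min (sq_nonneg _) zero_le_one))
        (rpow_nonneg hε.le m)
    · filter_upwards [self_mem_nhdsWithin] with ε (hε : 0 < ε)
      rw [rpow_sub hε, rpow_two, div_le_iff₀ (rpow_pos_of_pos hε m)]
      calc J v * min ((l * ‖ε • v‖) ^ 2) 1 ≤ J v * (l * ‖ε • v‖) ^ 2 :=
            mul_le_mul_of_nonneg_left (min_le_left _ _) (hJnn v)
        _ = _ := by
          rw [norm_smul, Real.norm_of_nonneg hε.le]
          field_simp

lemma kpp_nonneg_of_le_convJ {N : ℕ} {J a u : Sp N → ℝ} {m ε c D : ℝ} {x : Sp N} (hε : 0 < ε)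
    (hux : 0 ≤ u x) (hD : D ≤ c * ε ^ m) (hconv : u x * (1 - D) ≤ convJ N J ε u x)
    (hreact : c * u x ≤ u x * (a x - u x)) :
    0 ≤ (1 / ε ^ m) * (convJ N J ε u x - u x) + u x * (a x - u x) := by
  have hεm : 0 < ε ^ m := rpow_pos_of_pos hε m
  have : -(c * u x) ≤ (1 / ε ^ m) * (convJ N J ε u x - u x) := by
    rw [one_div, le_inv_mul_iff₀ hεm]; nlinarith
  linarith

theorem statement6_general (N : ℕ) (m : ℝ) (hm0 : 0 ≤ m) (hm2 : m < 2)
    (a J : Sp N → ℝ) (ha : assumpA N a) (hJ : assumpJ N J m)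
    (θ : ℝ) (hθ0 : 0 < θ) (hθ1 : θ < 1) (z : Sp N) (hz : max (a z) 0 ≠ 0) :
    ∃ V : Set (Sp N), V ∈ nhds z ∧ V ⊆ {x : Sp N | max (a x) 0 ≠ 0} ∧
      ∃ εzθ > (0 : ℝ), ∃ u : Sp N → ℝ,
        Continuous u ∧ HasCompactSupport u ∧ (∀ x, 0 ≤ u x) ∧
        {x : Sp N | u x ≠ 0} = V ∧
        (1 - θ) * max (a z) 0 ≤ u z ∧
        (∀ x ∈ V, u x < max (a x) 0) ∧
        (∀ ε : ℝ, 0 < ε → ε < εzθ → ∀ x : Sp N,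
          0 ≤ (1 / ε ^ m) * (convJ N J ε u x - u x) + u x * (a x - u x)) := by
  obtain ⟨hacont, -, -, -⟩ := ha
  obtain ⟨hJint, hJnn, hJrad, hJmass, hJmom⟩ := hJ
  have haz : 0 < a z := by contrapose! hz; exact max_eq_right hz
  obtain ⟨r, hr, hball⟩ := Metric.isOpen_iff.1 (isOpen_lt continuous_const hacont) z
    (show (1 - θ / 2) * a z < a z by nlinarith)
  obtain ⟨l, hl⟩ := exists_support_cubeBump_subset_ball z hr
  set δ := (1 - θ) * a z
  have hδ : 0 < δ := mul_pos (sub_pos.2 hθ1) haz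
  set u := fun x => δ * cubeBump l z x
  have hu : Continuous u := continuous_const.mul (continuous_cubeBump l z)
  have hus : HasCompactSupport u := HasCompactSupport.intro (isCompact_closedBall z r) fun x hx =>
    not_not.1 fun hux => hx (ball_subset_closedBall (hl (right_ne_zero_of_mul hux)))
  have hunn : ∀ x, 0 ≤ u x := fun x => mul_nonneg hδ.le (cubeBump_nonneg l z x)
  have hule : ∀ x, u x ≤ δ := fun x => mul_le_of_le_one_right hδ.le (cubeBump_le_one l z x)
  have hc : 0 < θ * a z / 2 := by positivity
  have haV : ∀ x, u x ≠ 0 → δ + θ * a z / 2 < a x := fun x hx => by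
    have : (1 - θ / 2) * a z < a x := hball (hl (right_ne_zero_of_mul hx))
    linarith
  obtain ⟨ε₀, hε₀, hsmall⟩ := (nhdsGT_basis 0).eventually_iff.1 <|
    (tendsto_integral_mul_min_sq_div_rpow hJint.1 hJnn hm0 hm2 hJmom l).eventually
      (gt_mem_nhds hc)
  refine ⟨{x | u x ≠ 0}, (isOpen_compl_singleton.preimage hu).mem_nhds (by simp [u, hδ.ne']),
    fun x hx => (lt_max_of_lt_left (by linarith [haV x hx])).ne', ε₀, hε₀, u, hu, hus,
    hunn, rfl, by simp [u, δ, max_eq_left haz.le],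
    fun x hx => lt_max_of_lt_left (by linarith [hule x, haV x hx]), ?_⟩
  intro ε hε hεε₀ x
  refine kpp_nonneg_of_le_convJ hε (hunn x) ((div_lt_iff₀ (rpow_pos_of_pos hε m)).1
    (hsmall ⟨hε, hεε₀⟩)).le ?_ ?_
  · exact mul_cubeBump_mul_one_sub_integral_le_convJ hJint hJnn hJrad hJmass hδ.le l z x hus hε
  · rcases eq_or_ne (u x) 0 with hx | hx
    · simp [hx]
    · nlinarith [haV x hx, hule x, hunn x]

/-- **Lemma 3.1 (Construction of sub-solutions).** For every `θ ∈ (0,1)` and every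
`z ∈ supp(a⁺)` there are a neighborhood `V ⊆ supp(a⁺)` of `z`, a number `ε_{z,θ} > 0` and a
nonnegative `u ∈ C_c(ℝ^N)` with `supp(u) = V`, `u(z) ≥ (1-θ) a⁺(z)`, `u < a⁺` on `V`, which is
a sub-solution of (KPP) for all `0 < ε < ε_{z,θ}`. -/
theorem statement6 (N : ℕ) (hN : 1 ≤ N) (m : ℝ) (hm0 : 0 ≤ m) (hm2 : m < 2)
    (a J : Sp N → ℝ) (ha : assumpA N a) (hJ : assumpJ N J m)
    (θ : ℝ) (hθ0 : 0 < θ) (hθ1 : θ < 1) (z : Sp N) (hz : max (a z) 0 ≠ 0) :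
    ∃ V : Set (Sp N), V ∈ nhds z ∧ V ⊆ {x : Sp N | max (a x) 0 ≠ 0} ∧
      ∃ εzθ > (0 : ℝ), ∃ u : Sp N → ℝ,
        Continuous u ∧ HasCompactSupport u ∧ (∀ x, 0 ≤ u x) ∧
        {x : Sp N | u x ≠ 0} = V ∧
        (1 - θ) * max (a z) 0 ≤ u z ∧
        (∀ x ∈ V, u x < max (a x) 0) ∧
        (∀ ε : ℝ, 0 < ε → ε < εzθ → ∀ x : Sp N,
          0 ≤ (1 / ε ^ m) * (convJ N J ε u x - u x) + u x * (a x - u x)) :=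
  statement6_general N m hm0 hm2 a J ha hJ θ hθ0 hθ1 z hz
end
end

section
/- (Construction of super-solutions.) Let N ≥ 1, 0 ≤ m ≤ 2 and β > 0. Let a satisfy assumption (1.1) and let J ∈ L¹(ℝ^N) be a nonnegative radially symmetric kernel with unit mass and finite β-th order moment ∫_{ℝ^N} J(x)|x|^β dx < ∞. Then, for every ε > 0, there exist a constant C > 0 and a positive function ū ∈ C₀(ℝ^N) such that a⁺(x) ≤ ū(x) ≤ C/(1 + |x|^β) for all x ∈ ℝ^N, and ū is a super-solution of (KPP), i.e. ε^{−m}(J_ε ∗ ū − ū)(x) + ū(x)(a(x) − ū(x)) ≤ 0 for all x ∈ ℝ^N. -/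
open MeasureTheory Filter Metric Set
open Topology

noncomputable section

/-! ### Auxiliary lemmas -/

lemma aux_hlim (c β : ℝ) (hβ : 0 < β) (hc : 0 ≤ c) :
    Tendsto (fun s : ℝ => (1+(s+c)^β)/(1+s^β)) atTop (𝓝 1) := by
  have h0 : Tendsto (fun s : ℝ => (s^β)⁻¹) atTop (𝓝 0) :=
    (tendsto_rpow_atTop hβ).inv_tendsto_atTop
  have h1 : Tendsto (fun s : ℝ => (1 + c/s)^β) atTop (𝓝 1) := by
    have : Tendsto (fun s : ℝ => 1 + c/s) atTop (𝓝 1) := by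
      simpa using (tendsto_const_nhds (x := (1:ℝ))).add (tendsto_const_nhds.div_atTop tendsto_id)
    have hcont : ContinuousAt (fun t : ℝ => t ^ β) 1 :=
      Real.continuousAt_rpow_const 1 β (Or.inl one_ne_zero)
    simpa [Real.one_rpow, Function.comp_def] using (hcont.tendsto.comp this)
  have hA : Tendsto (fun s : ℝ => (s^β)⁻¹ + (1 + c/s)^β) atTop (𝓝 1) := by
    simpa using h0.add h1
  have hB : Tendsto (fun s : ℝ => (s^β)⁻¹ + 1) atTop (𝓝 1) := by
    simpa using h0.add (tendsto_const_nhds (x := (1:ℝ)))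
  have hD := hA.div hB one_ne_zero
  refine Tendsto.congr' ?_ (by simpa using hD)
  filter_upwards [eventually_gt_atTop (0:ℝ)] with s hs
  have hsβ : (0:ℝ) < s ^ β := Real.rpow_pos_of_pos hs β
  have h2 : (1 + c/s)^β = (s+c)^β / s^β := by
    rw [show (1 + c/s) = (s+c)/s by field_simp, Real.div_rpow (by linarith) hs.le]
  simp only [Pi.div_apply]
  rw [h2]
  field_simp

lemma aux_ratio_lim (N : ℕ) (β : ℝ) (hβ : 0 < β) (z : Sp N) :
    Tendsto (fun x : Sp N => (1+‖x‖^β)/(1+‖x-z‖^β)) (cocompact (Sp N)) (𝓝 1) := by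
  have hnorm : Tendsto (fun x : Sp N => ‖x‖) (cocompact (Sp N)) atTop :=
    tendsto_norm_cocompact_atTop
  have hnormz : Tendsto (fun x : Sp N => ‖x - z‖) (cocompact (Sp N)) atTop := by
    refine tendsto_atTop_mono (fun x => ?_) (tendsto_atTop_add_const_right _ (-‖z‖) hnorm)
    have := norm_sub_norm_le x z
    linarith
  have hupper : Tendsto (fun x : Sp N => (1+(‖x-z‖+‖z‖)^β)/(1+‖x-z‖^β))
      (cocompact (Sp N)) (𝓝 1) := (aux_hlim ‖z‖ β hβ (norm_nonneg z)).comp hnormz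
  have hlower : Tendsto (fun x : Sp N => (1+‖x‖^β)/(1+(‖x‖+‖z‖)^β))
      (cocompact (Sp N)) (𝓝 1) := by
    have := ((aux_hlim ‖z‖ β hβ (norm_nonneg z)).comp hnorm).inv₀ one_ne_zero
    simp only [Function.comp_def, one_div, inv_div] at this ⊢
    simpa using this
  refine tendsto_of_tendsto_of_tendsto_of_le_of_le hlower hupper (fun x => ?_) (fun x => ?_)
  · have h1 : (0:ℝ) < 1 + ‖x-z‖^β := by positivity
    have h2 : (0:ℝ) < 1 + (‖x‖+‖z‖)^β := by positivity
    have h3 : ‖x - z‖ ≤ ‖x‖ + ‖z‖ := norm_sub_le x z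
    gcongr
  · have h3 : ‖x‖ ≤ ‖x - z‖ + ‖z‖ := by
      simpa using norm_add_le (x - z) z
    gcongr

lemma aux_rpow_add_le (β : ℝ) (hβ : 0 < β) {A B : ℝ} (hA : 0 ≤ A) (hB : 0 ≤ B) :
    (A + B) ^ β ≤ 2 ^ β * (A ^ β + B ^ β) := by
  have h1 : A + B ≤ 2 * max A B := by
    rcases le_total A B with h | h
    · simp [max_eq_right h]; linarith
    · simp [max_eq_left h]; linarith
  have h2 : (A+B)^β ≤ (2 * max A B)^β :=
    Real.rpow_le_rpow (by linarith) h1 hβ.le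
  have h3 : (2 * max A B)^β = 2^β * (max A B)^β :=
    Real.mul_rpow (by norm_num) (le_max_iff.2 (Or.inl hA))
  have h4 : (max A B)^β ≤ A^β + B^β := by
    rcases le_total A B with h | h
    · rw [max_eq_right h]; have : 0 ≤ A^β := Real.rpow_nonneg hA β; linarith
    · rw [max_eq_left h]; have : 0 ≤ B^β := Real.rpow_nonneg hB β; linarith
  calc (A+B)^β ≤ 2^β * (max A B)^β := by rw [← h3]; exact h2
    _ ≤ 2^β * (A^β + B^β) := by
        have : (0:ℝ) ≤ 2^β := Real.rpow_nonneg (by norm_num) β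
        nlinarith

lemma aux_peetre (N : ℕ) (β : ℝ) (hβ : 0 < β) (x z : Sp N) :
    1 + ‖x‖^β ≤ 2^β * ((1+‖z‖^β) * (1+‖x-z‖^β)) := by
  have h3 : ‖x‖ ≤ ‖x - z‖ + ‖z‖ := by simpa using norm_add_le (x - z) z
  have h2 : ‖x‖^β ≤ (‖x-z‖ + ‖z‖)^β := Real.rpow_le_rpow (norm_nonneg _) h3 hβ.le
  have h4 := aux_rpow_add_le β hβ (norm_nonneg (x-z)) (norm_nonneg z)
  have h5 : (1:ℝ) ≤ 2^β := Real.one_le_rpow (by norm_num) hβ.le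
  have ha : 0 ≤ ‖x-z‖^β := Real.rpow_nonneg (norm_nonneg _) β
  have hb : 0 ≤ ‖z‖^β := Real.rpow_nonneg (norm_nonneg _) β
  nlinarith [mul_nonneg (mul_nonneg (Real.rpow_nonneg (by norm_num : (0:ℝ) ≤ 2) β) ha) hb]

lemma aux_conv_ratio_lim (N : ℕ) (β : ℝ) (hβ : 0 < β) (ν : Sp N → ℝ)
    (hν_int : Integrable ν) (hν_nonneg : ∀ z, 0 ≤ ν z) (hν_mass : (∫ z, ν z) = 1)
    (hν_mom : Integrable (fun z : Sp N => ν z * ‖z‖ ^ β)) :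
    Tendsto (fun x : Sp N => ∫ z, ν z * ((1+‖x‖^β)/(1+‖x-z‖^β)))
      (cocompact (Sp N)) (𝓝 1) := by
  haveI : (cocompact (Sp N)).IsCountablyGenerated := by
    rw [← Metric.cobounded_eq_cocompact, ← comap_norm_atTop]
    infer_instance
  have key := MeasureTheory.tendsto_integral_filter_of_dominated_convergence
    (μ := (volume : Measure (Sp N))) (l := cocompact (Sp N))
    (F := fun x z => ν z * ((1+‖x‖^β)/(1+‖x-z‖^β))) (f := ν)
    (bound := fun z => ν z * (2^β * (1+‖z‖^β)))
    ?_ ?_ ?_ ?_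
  · rwa [hν_mass] at key
  · filter_upwards with x
    refine hν_int.aestronglyMeasurable.mul (Continuous.aestronglyMeasurable ?_)
    refine continuous_const.div (continuous_const.add ?_) (fun z => by positivity)
    exact (Real.continuous_rpow_const hβ.le).comp ((continuous_const.sub continuous_id).norm)
  · filter_upwards with x
    filter_upwards with z
    have h1 : (0:ℝ) < 1 + ‖x-z‖^β := by positivity
    have hr : (0:ℝ) ≤ (1+‖x‖^β)/(1+‖x-z‖^β) := by positivity
    rw [Real.norm_eq_abs, abs_of_nonneg (mul_nonneg (hν_nonneg z) hr)]
    refine mul_le_mul_of_nonneg_left ?_ (hν_nonneg z)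
    rw [div_le_iff₀ h1]
    calc 1 + ‖x‖^β ≤ 2^β * ((1+‖z‖^β) * (1+‖x-z‖^β)) := aux_peetre N β hβ x z
      _ = 2^β * (1+‖z‖^β) * (1+‖x-z‖^β) := by ring
  · refine ((hν_int.add hν_mom).const_mul (2^β)).congr ?_
    filter_upwards with z
    simp only [Pi.add_apply]
    ring
  · filter_upwards with z
    simpa using (aux_ratio_lim N β hβ z).const_mul (ν z)

set_option maxHeartbeats 1600000 in
/-- **Lemma 3.2 (Construction of super-solutions).** -/
theorem statement7 (N : ℕ) (hN : 1 ≤ N) (m : ℝ) (hm0 : 0 ≤ m) (hm2 : m ≤ 2)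
    (β : ℝ) (hβ : 0 < β) (a J : Sp N → ℝ) (ha : assumpA N a)
    (hJint : Integrable J) (hJpos : ∀ x, 0 ≤ J x)
    (hJrad : ∀ x y : Sp N, ‖x‖ = ‖y‖ → J x = J y) (hJmass : (∫ x, J x) = 1)
    (hmom : Integrable (fun x : Sp N => J x * ‖x‖ ^ β)) (ε : ℝ) (hε : 0 < ε) :
    ∃ C > (0 : ℝ), ∃ u : Sp N → ℝ,
      Continuous u ∧ Tendsto u (cocompact (Sp N)) (nhds 0) ∧ (∀ x, 0 < u x) ∧
      (∀ x : Sp N, max (a x) 0 ≤ u x ∧ u x ≤ C / (1 + ‖x‖ ^ β)) ∧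
      (∀ x : Sp N,
        (1 / ε ^ m) * (convJ N J ε u x - u x) + u x * (a x - u x) ≤ 0) := by
  obtain ⟨hacont, ⟨Ca0, hCa0⟩, -, R, δ, hδ, haR⟩ := ha
  set Ca : ℝ := max Ca0 0 with hCa_def
  have hCa : ∀ x, a x ≤ Ca := fun x => le_trans (le_trans (le_abs_self _) (hCa0 x)) (le_max_left _ _)
  have hCa_nonneg : 0 ≤ Ca := le_max_right _ _
  -- the rescaled kernel
  set ν : Sp N → ℝ := fun z => (1 / ε ^ N) * J (ε⁻¹ • z) with hν_def
  have hν_nonneg : ∀ z, 0 ≤ ν z := fun z => mul_nonneg (by positivity) (hJpos _)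
  have hν_int : Integrable ν := (hJint.comp_smul (inv_ne_zero hε.ne')).const_mul _
  have hν_mass : (∫ z, ν z) = 1 := by
    rw [hν_def]
    rw [MeasureTheory.integral_const_mul, MeasureTheory.Measure.integral_comp_inv_smul volume J ε]
    simp only [finrank_euclideanSpace_fin, smul_eq_mul, hJmass, mul_one]
    rw [abs_of_pos (pow_pos hε N)]
    field_simp
  have hν_mom : Integrable (fun z : Sp N => ν z * ‖z‖ ^ β) := by
    have he : (fun z : Sp N => ν z * ‖z‖ ^ β)
        = fun z => ((1 / ε ^ N) * ε ^ β) * ((fun y => J y * ‖y‖ ^ β) (ε⁻¹ • z)) := by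
      funext z
      have h1 : ‖ε⁻¹ • z‖ = ε⁻¹ * ‖z‖ := by
        rw [norm_smul, Real.norm_eq_abs, abs_of_pos (inv_pos.2 hε)]
      have h2 : ‖ε⁻¹ • z‖ ^ β = (ε ^ β)⁻¹ * ‖z‖ ^ β := by
        rw [h1, Real.mul_rpow (by positivity) (norm_nonneg z), Real.inv_rpow hε.le]
      have h3 : (0:ℝ) < ε ^ β := Real.rpow_pos_of_pos hε β
      show 1 / ε ^ N * J (ε⁻¹ • z) * ‖z‖ ^ β = 1 / ε ^ N * ε ^ β * (J (ε⁻¹ • z) * ‖ε⁻¹ • z‖ ^ β)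
      rw [h2]; field_simp
    rw [he]
    exact (hmom.comp_smul (inv_ne_zero hε.ne')).const_mul _
  -- the base profile
  set u₀ : Sp N → ℝ := fun x => (1 + ‖x‖ ^ β)⁻¹ with hu₀_def
  have hu₀den : ∀ x : Sp N, (0:ℝ) < 1 + ‖x‖ ^ β := fun x => by positivity
  have hu₀pos : ∀ x, 0 < u₀ x := fun x => inv_pos.2 (hu₀den x)
  have hu₀le1 : ∀ x, u₀ x ≤ 1 := fun x => by
    rw [hu₀_def]
    have := Real.rpow_nonneg (norm_nonneg x) β
    simpa using inv_le_one_of_one_le₀ (by linarith)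
  have hu₀cont : Continuous u₀ := by
    refine Continuous.inv₀ (continuous_const.add ?_) (fun x => (hu₀den x).ne')
    exact (Real.continuous_rpow_const hβ.le).comp continuous_norm
  have hu₀lim : Tendsto u₀ (cocompact (Sp N)) (𝓝 0) := by
    have h1 : Tendsto (fun x : Sp N => 1 + ‖x‖ ^ β) (cocompact (Sp N)) atTop := by
      refine tendsto_atTop_add_const_left _ 1 ?_
      exact (tendsto_rpow_atTop hβ).comp tendsto_norm_cocompact_atTop
    exact h1.inv_tendsto_atTop
  -- convolution of the base profile, and its basic properties
  set K : Sp N → ℝ := fun x => ∫ z, ν z * u₀ (x - z) with hK_def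
  have hconv : ∀ (v : Sp N → ℝ) (x : Sp N),
      convJ N J ε v x = ∫ z, ν z * v (x - z) := by
    intro v x
    rw [convJ]
    rw [← MeasureTheory.integral_sub_left_eq_self
      (fun y => Jresc N J ε (x - y) * v y) volume x]
    congr 1
    funext t
    simp [Jresc, hν_def, sub_sub_cancel]
  have hKint : ∀ x : Sp N, Integrable (fun z => ν z * u₀ (x - z)) := by
    intro x
    refine hν_int.mono ?_ (ae_of_all _ fun z => ?_)
    · exact hν_int.aestronglyMeasurable.mul
        ((hu₀cont.comp (continuous_const.sub continuous_id)).aestronglyMeasurable)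
    · rw [Real.norm_eq_abs, Real.norm_eq_abs,
        abs_of_nonneg (mul_nonneg (hν_nonneg z) (hu₀pos _).le), abs_of_nonneg (hν_nonneg z)]
      nlinarith [hν_nonneg z, hu₀pos (x - z), hu₀le1 (x - z)]
  have hKle1 : ∀ x, K x ≤ 1 := by
    intro x
    rw [hK_def, ← hν_mass]
    refine integral_mono (hKint x) hν_int (fun z => ?_)
    nlinarith [hν_nonneg z, hu₀pos (x - z), hu₀le1 (x - z)]
  -- the key limit
  have hKlim : Tendsto (fun x => K x * (u₀ x)⁻¹) (cocompact (Sp N)) (𝓝 1) := by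
    refine (aux_conv_ratio_lim N β hβ ν hν_int hν_nonneg hν_mass hν_mom).congr (fun x => ?_)
    rw [hK_def, ← MeasureTheory.integral_mul_const]
    congr 1
    funext z
    rw [hu₀_def]
    simp only [inv_inv]
    rw [div_eq_mul_inv]
    ring
  -- constants
  set εm : ℝ := ε ^ m with hεm_def
  have hεm : 0 < εm := Real.rpow_pos_of_pos hε m
  set η : ℝ := εm * δ / 2 with hη_def
  have hη : 0 < η := by positivity
  -- eventual bounds
  have hev : ∀ᶠ x : Sp N in cocompact (Sp N), K x * (u₀ x)⁻¹ ≤ 1 + η ∧ a x ≤ -δ := by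
    have h1 : ∀ᶠ x : Sp N in cocompact (Sp N), K x * (u₀ x)⁻¹ ≤ 1 + η :=
      hKlim.eventually (eventually_le_nhds (by linarith))
    have h2 : ∀ᶠ x : Sp N in cocompact (Sp N), a x ≤ -δ := by
      filter_upwards [tendsto_norm_cocompact_atTop.eventually_ge_atTop R] with x hx
      exact haR x hx
    exact h1.and h2
  obtain ⟨Kc, hKc_comp, hKc⟩ := mem_cocompact.mp hev
  obtain ⟨r, hr⟩ := hKc_comp.isBounded.subset_closedBall 0
  set R₁ : ℝ := max r (max R 0) with hR₁_def
  have hR₁_nonneg : (0:ℝ) ≤ R₁ := le_trans (le_max_right _ _) (le_max_right _ _)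
  have hout : ∀ x : Sp N, R₁ < ‖x‖ → K x * (u₀ x)⁻¹ ≤ 1 + η ∧ a x ≤ -δ := by
    intro x hx
    refine hKc ?_
    intro hmem
    have := hr hmem
    rw [mem_closedBall, dist_zero_right] at this
    have : ‖x‖ ≤ R₁ := le_trans this (le_max_left _ _)
    linarith
  -- lower bound for u₀ on the ball
  set μ₀ : ℝ := (1 + R₁ ^ β)⁻¹ with hμ₀_def
  have hR₁β : (0:ℝ) < 1 + R₁ ^ β := by positivity
  have hμ₀ : 0 < μ₀ := inv_pos.2 hR₁β
  have hμ₀cancel : μ₀ * (1 + R₁ ^ β) = 1 := inv_mul_cancel₀ hR₁β.ne'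
  have hin : ∀ x : Sp N, ‖x‖ ≤ R₁ → μ₀ ≤ u₀ x := by
    intro x hx
    rw [hμ₀_def, hu₀_def]
    have : ‖x‖ ^ β ≤ R₁ ^ β := Real.rpow_le_rpow (norm_nonneg x) hx hβ.le
    exact inv_anti₀ (hu₀den x) (by linarith)
  -- the constant
  set lam : ℝ := max 1 (max (Ca * (1 + R₁ ^ β)) ((1/εm + Ca) * (1 + R₁ ^ β)^2)) with hlam_def
  have hlam1 : (1:ℝ) ≤ lam := le_max_left _ _
  have hlam : 0 < lam := lt_of_lt_of_le one_pos hlam1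
  have hlamCa : Ca * (1 + R₁ ^ β) ≤ lam := le_trans (le_max_left _ _) (le_max_right _ _)
  have hlamB : (1/εm + Ca) * (1 + R₁ ^ β)^2 ≤ lam := le_trans (le_max_right _ _) (le_max_right _ _)
  clear_value lam μ₀ η K εm R₁ Ca
  refine ⟨lam, hlam, fun x => lam * u₀ x, ?_, ?_, ?_, ?_, ?_⟩
  · exact continuous_const.mul hu₀cont
  · simpa using hu₀lim.const_mul lam
  · exact fun x => mul_pos hlam (hu₀pos x)
  · intro x
    constructor
    · rcases le_or_gt ‖x‖ R₁ with hx | hx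
      · have h1 : a x ≤ Ca := hCa x
        have h2 : μ₀ ≤ u₀ x := hin x hx
        have h3 : Ca ≤ lam * μ₀ := by
          calc Ca = Ca * (1 + R₁ ^ β) * μ₀ := by
                rw [mul_assoc, mul_comm (1 + R₁ ^ β) μ₀, hμ₀cancel, mul_one]
            _ ≤ lam * μ₀ := mul_le_mul_of_nonneg_right hlamCa hμ₀.le
        have : Ca ≤ lam * u₀ x := le_trans h3 (mul_le_mul_of_nonneg_left h2 hlam.le)
        exact max_le (le_trans h1 this) (mul_nonneg hlam.le (hu₀pos x).le)
      · have hxR : R ≤ ‖x‖ := by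
          rw [hR₁_def] at hx
          exact le_trans (le_trans (le_max_left _ _) (le_max_right _ _)) hx.le
        have h1 : a x ≤ -δ := haR x hxR
        have h2 := mul_pos hlam (hu₀pos x)
        refine max_le ?_ h2.le
        show a x ≤ lam * u₀ x
        linarith
    · show lam * u₀ x ≤ lam / (1 + ‖x‖ ^ β)
      rw [hu₀_def, div_eq_mul_inv]
  · intro x
    have hconvlam : convJ N J ε (fun x => lam * u₀ x) x = lam * K x := by
      rw [hconv (fun x => lam * u₀ x) x, hK_def, ← MeasureTheory.integral_const_mul]
      congr 1
      funext z
      ring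
    show (1 / εm) * (convJ N J ε (fun x => lam * u₀ x) x - lam * u₀ x)
      + lam * u₀ x * (a x - lam * u₀ x) ≤ 0
    rw [hconvlam]
    have hs : 0 < u₀ x := hu₀pos x
    have hs1 : u₀ x ≤ 1 := hu₀le1 x
    have hKx : K x ≤ 1 := hKle1 x
    have hax : a x ≤ Ca := hCa x
    rcases le_or_gt ‖x‖ R₁ with hx | hx
    · -- inside the ball
      have hsμ : μ₀ ≤ u₀ x := hin x hx
      set s : ℝ := u₀ x with hs_def
      set kx : ℝ := K x with hkx_def
      set A : ℝ := a x with hA_def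
      clear_value s kx A
      clear hs_def hkx_def hA_def hconvlam hKlim hev hKc hout hin hu₀cont hu₀lim hconv hKint
        hν_int hν_mass hν_mom hν_nonneg hacont hJrad hJmass hJint hmom hKc_comp hr hCa0 haR
        hK_def hu₀_def hν_def hu₀den hu₀pos hu₀le1 hKle1 hCa
      have hkey : 1/εm + Ca ≤ lam * μ₀^2 := by
        calc 1/εm + Ca = (1/εm + Ca) * (1 + R₁ ^ β)^2 * μ₀^2 := by
              have h0 : (1 + R₁ ^ β) * μ₀ = 1 := by
                rw [mul_comm]; exact hμ₀cancel
              calc 1/εm + Ca = (1/εm + Ca) * (((1 + R₁ ^ β) * μ₀) * ((1 + R₁ ^ β) * μ₀)) := by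
                    rw [h0]; ring
                _ = (1/εm + Ca) * (1 + R₁ ^ β)^2 * μ₀^2 := by ring
          _ ≤ lam * μ₀^2 := mul_le_mul_of_nonneg_right hlamB (sq_nonneg μ₀)
      have h2 : lam * μ₀^2 ≤ lam * s^2 := by
        have h2' := mul_le_mul_of_nonneg_left (mul_le_mul hsμ hsμ hμ₀.le hs.le) hlam.le
        calc lam * μ₀^2 = lam * (μ₀ * μ₀) := by ring
          _ ≤ lam * (s * s) := h2'
          _ = lam * s^2 := by ring
      have hterm1 : (1 / εm) * (lam * kx - lam * s) ≤ lam * (1/εm) := by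
        have h3 : lam * kx - lam * s ≤ lam := by nlinarith
        calc (1 / εm) * (lam * kx - lam * s) ≤ (1/εm) * lam :=
              mul_le_mul_of_nonneg_left h3 (by positivity)
          _ = lam * (1/εm) := by ring
      have ht1 : lam * s * A ≤ lam * s * Ca := mul_le_mul_of_nonneg_left hax (mul_pos hlam hs).le
      have ht2 : lam * s * Ca ≤ lam * Ca := by
        nlinarith [mul_nonneg (mul_nonneg hlam.le hCa_nonneg) (by linarith : (0:ℝ) ≤ 1 - s)]
      have hterm2 : lam * s * (A - lam * s) ≤ lam * Ca - lam * (lam * s^2) := by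
        nlinarith [ht1, ht2]
      have hfinal : lam * (1/εm) + lam * Ca - lam * (lam * s^2) ≤ 0 := by
        nlinarith
      linarith
    · -- outside the ball
      obtain ⟨hK1, ha1⟩ := hout x hx
      have hKs : K x ≤ (1 + η) * u₀ x := by
        have := mul_le_mul_of_nonneg_right hK1 hs.le
        rwa [mul_assoc, inv_mul_cancel₀ hs.ne', mul_one] at this
      set s : ℝ := u₀ x with hs_def
      set kx : ℝ := K x with hkx_def
      set A : ℝ := a x with hA_def
      clear_value s kx A
      clear hs_def hkx_def hA_def hconvlam hKlim hev hKc hout hin hu₀cont hu₀lim hconv hKint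
        hν_int hν_mass hν_mom hν_nonneg hacont hJrad hJmass hJint hmom hKc_comp hr hCa0 haR
        hK_def hu₀_def hν_def hu₀den hu₀pos hu₀le1 hKle1 hCa hK1
      have hterm1 : (1 / εm) * (lam * kx - lam * s) ≤ lam * (δ/2) * s := by
        have h1 : lam * kx - lam * s ≤ lam * (η * s) := by nlinarith
        calc (1 / εm) * (lam * kx - lam * s) ≤ (1/εm) * (lam * (η * s)) :=
              mul_le_mul_of_nonneg_left h1 (by positivity)
          _ = lam * (δ/2) * s := by rw [hη_def]; field_simp [hεm.ne']
      have hterm2 : lam * s * (A - lam * s) ≤ -(lam * δ * s) := by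
        nlinarith [mul_pos hlam hs, mul_pos (mul_pos hlam hlam) (mul_pos hs hs)]
      have hlast : lam * (δ/2) * s - lam * δ * s ≤ 0 := by
        nlinarith [mul_nonneg (mul_nonneg hlam.le hδ.le) hs.le]
      linarith
end
end

section
/- (Comparison principle for the truncated problem.) Let N ≥ 1, m ≥ 0, ε > 0, R > 0, let a ∈ C(ℝ^N) ∩ L^∞(ℝ^N), and let J ∈ L¹(ℝ^N) be a nonnegative function. Let v be continuous and positive on B̄_R with M_{R,ε,m}[v](x) + v(x)(a(x) − v(x)) ≤ 0 for all x ∈ B_R (super-solution), and let u be continuous and nonnegative on B̄_R with M_{R,ε,m}[u](x) + u(x)(a(x) − u(x)) ≥ 0 for all x ∈ B_R (sub-solution). Then u ≤ v on B̄_R. -/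
open MeasureTheory Filter Metric Set

noncomputable section

/-- The truncated operator `M_{R,ε,m}[φ](x) = ε^{-m}(∫_{B_R} J_ε(x-y) φ(y) dy - φ(x))`. -/
def truncOp (N : ℕ) (J : Sp N → ℝ) (R ε m : ℝ) (φ : Sp N → ℝ) (x : Sp N) : ℝ :=
  (1 / ε ^ m) * ((∫ y in ball (0 : Sp N) R, Jresc N J ε (x - y) * φ y) - φ x)

/-!
Suppose `u > v` somewhere and let `θ > 1` be the maximum of `u / v` on `B̄_R`, attained at `x₀`.
Then `θ v - u ≥ 0` on `B̄_R`, so since `J_ε ≥ 0` the nonlocal term of the sub-solution exceeds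
`θ` times that of the super-solution by at most `ε^{-m} (θ v - u)(x)`. Subtracting the two
inequalities gives, on `B_R`,
`0 ≤ ε^{-m} (θ v - u) + u (a - u) - θ v (a - v)`,
which extends to `x₀ ∈ B̄_R` by continuity. At `x₀` we have `u = θ v`, and the right-hand side
becomes `θ (1 - θ) v(x₀)² < 0`.
-/

variable {N : ℕ} {J : Sp N → ℝ} {ε : ℝ}

lemma integrable_Jresc (hε : ε ≠ 0) (hJ : Integrable J) : Integrable (Jresc N J ε) :=
  ((integrable_comp_smul_iff volume J (inv_ne_zero hε)).2 hJ).const_mul _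

lemma Jresc_nonneg (hε : 0 ≤ ε) (hJ : ∀ x, 0 ≤ J x) (z : Sp N) : 0 ≤ Jresc N J ε z :=
  mul_nonneg (by positivity) (hJ _)

lemma integrableOn_ball_Jresc_mul {R : ℝ} {f : Sp N → ℝ} (hε : ε ≠ 0) (hJ : Integrable J)
    (hf : ContinuousOn f (closedBall 0 R)) (x : Sp N) :
    IntegrableOn (fun y => Jresc N J ε (x - y) * f y) (ball 0 R) :=
  ((integrable_comp_sub_left _ x).2 (integrable_Jresc hε hJ)).integrableOn.mul_continuousOn_of_subset
    hf measurableSet_ball (isCompact_closedBall 0 R) ball_subset_closedBall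

lemma truncOp_le_mul_add {R m θ : ℝ} {u v : Sp N → ℝ} (hε : 0 < ε) (hJint : Integrable J)
    (hJpos : ∀ x, 0 ≤ J x) (hu : ContinuousOn u (closedBall 0 R))
    (hv : ContinuousOn v (closedBall 0 R)) (huv : ∀ y ∈ ball 0 R, u y ≤ θ * v y) (x : Sp N) :
    truncOp N J R ε m u x ≤ θ * truncOp N J R ε m v x + 1 / ε ^ m * (θ * v x - u x) := by
  have hint : (∫ y in ball 0 R, Jresc N J ε (x - y) * u y)
      ≤ θ * ∫ y in ball 0 R, Jresc N J ε (x - y) * v y := by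
    rw [← integral_const_mul]
    refine setIntegral_mono_on (integrableOn_ball_Jresc_mul hε.ne' hJint hu x)
      ((integrableOn_ball_Jresc_mul hε.ne' hJint hv x).const_mul θ) measurableSet_ball
      fun y hy => ?_
    rw [mul_left_comm]
    exact mul_le_mul_of_nonneg_left (huv y hy) (Jresc_nonneg hε.le hJpos _)
  have hεm : 0 ≤ 1 / ε ^ m := by positivity
  unfold truncOp
  linarith [mul_le_mul_of_nonneg_left hint hεm]

theorem statement9_general (N : ℕ) (m : ℝ) (ε : ℝ) (hε : 0 < ε)
    (R : ℝ) (hR : 0 < R) (a : Sp N → ℝ) (hacont : Continuous a)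
    (J : Sp N → ℝ) (hJint : Integrable J) (hJpos : ∀ x, 0 ≤ J x)
    (v : Sp N → ℝ) (hvcont : ContinuousOn v (closedBall (0 : Sp N) R))
    (hvpos : ∀ x ∈ closedBall (0 : Sp N) R, 0 < v x)
    (hvsuper : ∀ x ∈ ball (0 : Sp N) R,
      truncOp N J R ε m v x + v x * (a x - v x) ≤ 0)
    (u : Sp N → ℝ) (hucont : ContinuousOn u (closedBall (0 : Sp N) R))
    (husub : ∀ x ∈ ball (0 : Sp N) R,
      0 ≤ truncOp N J R ε m u x + u x * (a x - u x)) :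
    ∀ x ∈ closedBall (0 : Sp N) R, u x ≤ v x := by
  by_contra! ⟨x₁, hx₁, hvu₁⟩
  obtain ⟨x₀, hx₀, hmax⟩ := (isCompact_closedBall (0 : Sp N) R).exists_isMaxOn ⟨x₁, hx₁⟩
    (hucont.div hvcont fun x hx => (hvpos x hx).ne')
  set θ := u x₀ / v x₀
  have hθ : 1 < θ := ((one_lt_div (hvpos x₁ hx₁)).2 hvu₁).trans_le (hmax hx₁)
  have hθ₀ : 0 < θ := one_pos.trans hθ
  have huv : ∀ y ∈ closedBall (0 : Sp N) R, u y ≤ θ * v y := fun y hy =>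
    (div_le_iff₀ (hvpos y hy)).1 (hmax hy)
  have hu₀ : u x₀ = θ * v x₀ := (div_mul_cancel₀ _ (hvpos x₀ hx₀).ne').symm
  set gap : Sp N → ℝ := fun x =>
    1 / ε ^ m * (θ * v x - u x) + (u x * (a x - u x) - θ * (v x * (a x - v x)))
  have hgap : ∀ x ∈ ball (0 : Sp N) R, 0 ≤ gap x := fun x hx => by
    have := truncOp_le_mul_add (m := m) hε hJint hJpos hucont hvcont
      (fun y hy => huv y (ball_subset_closedBall hy)) x
    linarith [husub x hx, mul_le_mul_of_nonneg_left (hvsuper x hx) hθ₀.le]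
  have hgap_cont : ContinuousOn gap (closedBall 0 R) := by fun_prop
  have hgap₀ : 0 ≤ gap x₀ := ContinuousWithinAt.closure_le (f := fun _ => 0)
    (by rwa [closure_ball _ hR.ne']) continuousWithinAt_const
    ((hgap_cont x₀ hx₀).mono ball_subset_closedBall) hgap
  have hv₀ := hvpos x₀ hx₀
  have : gap x₀ = θ * (1 - θ) * v x₀ ^ 2 := by simp only [gap, hu₀]; ring
  linarith [mul_pos (mul_pos hθ₀ (sub_pos.2 hθ)) (pow_pos hv₀ 2)]

/-- **Lemma 4.2 (Comparison principle for the truncated problem).** If `v` is a positive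
continuous super-solution and `u` a nonnegative continuous sub-solution of the truncated
problem on `B̄_R`, then `u ≤ v` on `B̄_R`. -/
theorem statement9 (N : ℕ) (hN : 1 ≤ N) (m : ℝ) (hm : 0 ≤ m) (ε : ℝ) (hε : 0 < ε)
    (R : ℝ) (hR : 0 < R) (a : Sp N → ℝ) (hacont : Continuous a)
    (habdd : ∃ C, ∀ x, |a x| ≤ C)
    (J : Sp N → ℝ) (hJint : Integrable J) (hJpos : ∀ x, 0 ≤ J x)
    (v : Sp N → ℝ) (hvcont : ContinuousOn v (closedBall (0 : Sp N) R))
    (hvpos : ∀ x ∈ closedBall (0 : Sp N) R, 0 < v x)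
    (hvsuper : ∀ x ∈ ball (0 : Sp N) R,
      truncOp N J R ε m v x + v x * (a x - v x) ≤ 0)
    (u : Sp N → ℝ) (hucont : ContinuousOn u (closedBall (0 : Sp N) R))
    (hupos : ∀ x ∈ closedBall (0 : Sp N) R, 0 ≤ u x)
    (husub : ∀ x ∈ ball (0 : Sp N) R,
      0 ≤ truncOp N J R ε m u x + u x * (a x - u x)) :
    ∀ x ∈ closedBall (0 : Sp N) R, u x ≤ v x :=
  statement9_general N m ε hε R hR a hacont J hJint hJpos v hvcont hvpos hvsuper u hucont husub
end
end

section
/- (Generalized mean value inequality.) Let N ≥ 1, let J ∈ L¹(ℝ^N) be nonnegative and radially symmetric, let ε > 0 and ρ > 0. Let u : ℝ^N → ℝ be continuous and bounded, and let x ∈ ℝ^N be such that for every 0 < r ≤ ρ the spherical average of u over the sphere ∂B_r(x) is at least u(x), i.e. ⨍_{𝕊^{N−1}} u(x + r e) dH^{N−1}(e) ≥ u(x). Then ∫_{B_ρ(x)} J_ε(x − y) u(y) dy ≥ u(x) ∫_{B_ρ(x)} J_ε(x − y) dy. -/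
open MeasureTheory Filter Metric Set

noncomputable section

lemma polar_aux {N : ℕ} [Nontrivial (Sp N)] (G : Sp N → ℝ) (hG : Integrable G) :
    (∫ z, G z) = (∫ p : sphere (0:Sp N) 1 × Ioi (0:ℝ), G ((p.2 : ℝ) • (p.1 : Sp N))
        ∂(((volume : Measure (Sp N)).toSphere).prod
           (Measure.volumeIoiPow (Module.finrank ℝ (Sp N) - 1))))
    ∧ Integrable (fun p : sphere (0:Sp N) 1 × Ioi (0:ℝ) => G ((p.2 : ℝ) • (p.1 : Sp N)))
        (((volume : Measure (Sp N)).toSphere).prod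
           (Measure.volumeIoiPow (Module.finrank ℝ (Sp N) - 1))) := by
  have hms : MeasurableSet ({0}ᶜ : Set (Sp N)) := (measurableSet_singleton _).compl
  set g : sphere (0:Sp N) 1 × Ioi (0:ℝ) → ℝ := fun p => G ((p.2 : ℝ) • (p.1 : Sp N)) with hg
  have hcomp : g ∘ (homeomorphUnitSphereProd (Sp N)) =
      fun z : ({0}ᶜ : Set (Sp N)) => G z := by
    funext z
    have hz : ‖(z : Sp N)‖ ≠ 0 := norm_ne_zero_iff.2 z.2
    simp only [hg, Function.comp_apply, homeomorphUnitSphereProd_apply_fst_coe,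
      homeomorphUnitSphereProd_apply_snd_coe]
    rw [smul_inv_smul₀ hz]
  constructor
  · calc ∫ z, G z = ∫ z in ({0}ᶜ : Set (Sp N)), G z := by
          rw [restrict_compl_singleton]
      _ = ∫ z : ({0}ᶜ : Set (Sp N)), G z ∂(Measure.comap Subtype.val volume) :=
          (integral_subtype_comap hms G).symm
      _ = ∫ z : ({0}ᶜ : Set (Sp N)), g (homeomorphUnitSphereProd (Sp N) z)
            ∂(Measure.comap Subtype.val volume) := by
          simp only [← hcomp]; rfl
      _ = _ := (Measure.measurePreserving_homeomorphUnitSphereProd volume).integral_comp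
            (Homeomorph.measurableEmbedding _) g
  · rw [← (Measure.measurePreserving_homeomorphUnitSphereProd
        (volume : Measure (Sp N))).integrable_comp_emb (Homeomorph.measurableEmbedding _)]
    show Integrable (g ∘ (homeomorphUnitSphereProd (Sp N))) _
    rw [hcomp]
    have h1 : Integrable (G ∘ (Subtype.val : ({0}ᶜ : Set (Sp N)) → Sp N))
        (Measure.comap Subtype.val volume) := by
      rw [← (MeasurableEmbedding.subtype_coe hms).integrable_map_iff,
        map_comap_subtype_coe hms]
      exact hG.restrict
    exact h1

/-- **Generalized mean value inequality.** If the spherical averages of `u` around `x` over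
all radii `0 < r ≤ ρ` dominate `u(x)`, then for a nonnegative radial kernel
`∫_{B_ρ(x)} J_ε(x-y) u(y) dy ≥ u(x) ∫_{B_ρ(x)} J_ε(x-y) dy`. -/
theorem statement12 (N : ℕ) (hN : 1 ≤ N) (J : Sp N → ℝ)
    (hJint : Integrable J) (hJpos : ∀ x, 0 ≤ J x)
    (hJrad : ∀ x y : Sp N, ‖x‖ = ‖y‖ → J x = J y)
    (ε : ℝ) (hε : 0 < ε) (ρ : ℝ) (hρ : 0 < ρ)
    (u : Sp N → ℝ) (hucont : Continuous u) (hubdd : ∃ C, ∀ x, |u x| ≤ C)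
    (x : Sp N)
    (hmean : ∀ r : ℝ, 0 < r → r ≤ ρ →
      u x ≤ ⨍ e : sphere (0 : Sp N) 1,
        u (x + r • (e : Sp N)) ∂((volume : Measure (Sp N)).toSphere)) :
    u x * ∫ y in ball x ρ, Jresc N J ε (x - y) ≤
      ∫ y in ball x ρ, Jresc N J ε (x - y) * u y := by
  classical
  obtain ⟨C, hC⟩ := hubdd
  have hε0 : (ε : ℝ) ≠ 0 := ne_of_gt hε
  have hrank : Module.finrank ℝ (Sp N) = N := finrank_euclideanSpace_fin
  have hnt : Nontrivial (Sp N) :=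
    Module.nontrivial_of_finrank_pos (R := ℝ) (by rw [hrank]; omega)
  set f : Sp N → ℝ := Jresc N J ε with hfdef
  have hfnn : ∀ z, 0 ≤ f z := fun z =>
    mul_nonneg (by positivity) (hJpos _)
  have hfrad : ∀ z w : Sp N, ‖z‖ = ‖w‖ → f z = f w := by
    intro z w h
    simp only [hfdef, Jresc]
    rw [hJrad (ε⁻¹ • z) (ε⁻¹ • w) (by rw [norm_smul, norm_smul, h])]
  have hfint : Integrable f := by
    have h := (hJint.comp_smul (inv_ne_zero hε0)).const_mul (1 / ε ^ N)
    exact h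
  -- translation
  have htrans : ∀ Φ : Sp N → ℝ,
      (∫ y in ball x ρ, Φ y) = ∫ z in ball (0:Sp N) ρ, Φ (x + z) := by
    intro Φ
    rw [← integral_indicator measurableSet_ball, ← integral_indicator measurableSet_ball,
        ← integral_add_left_eq_self (fun y => (ball x ρ).indicator Φ y) x]
    congr 1
    funext z
    have hmem : x + z ∈ ball x ρ ↔ z ∈ ball (0:Sp N) ρ := by
      simp [mem_ball, dist_eq_norm]
    by_cases hz : z ∈ ball (0:Sp N) ρ
    · rw [indicator_of_mem (hmem.2 hz), indicator_of_mem hz]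
    · rw [indicator_of_notMem (fun h => hz (hmem.1 h)), indicator_of_notMem hz]
  have hL : (∫ y in ball x ρ, Jresc N J ε (x - y) * u y)
      = ∫ z in ball (0:Sp N) ρ, f z * u (x + z) := by
    rw [htrans (fun y => Jresc N J ε (x - y) * u y)]
    refine setIntegral_congr_fun measurableSet_ball fun z _ => ?_
    have h1 : x - (x + z) = -z := by abel
    show f (x - (x + z)) * u (x + z) = f z * u (x + z)
    rw [h1, hfrad (-z) z (norm_neg z)]
  have hR : (∫ y in ball x ρ, Jresc N J ε (x - y))
      = ∫ z in ball (0:Sp N) ρ, f z := by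
    rw [htrans (fun y => Jresc N J ε (x - y))]
    refine setIntegral_congr_fun measurableSet_ball fun z _ => ?_
    have h1 : x - (x + z) = -z := by abel
    show f (x - (x + z)) = f z
    rw [h1, hfrad (-z) z (norm_neg z)]
  rw [hL, hR]
  -- polar coordinates
  set ν := ((volume : Measure (Sp N)).toSphere) with hν
  set κ := Measure.volumeIoiPow (Module.finrank ℝ (Sp N) - 1) with hκ
  obtain ⟨v, hv⟩ : (sphere (0:Sp N) 1).Nonempty := NormedSpace.sphere_nonempty.2 zero_le_one
  have hv1 : ‖v‖ = 1 := mem_sphere_zero_iff_norm.1 hv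
  set φ : ℝ → ℝ := fun r => f (r • v) with hφdef
  set ψ : ℝ → ℝ := fun r => if r < ρ then φ r else 0 with hψdef
  have hψnn : ∀ r, 0 ≤ ψ r := by
    intro r; simp only [hψdef]
    split
    exacts [hfnn _, le_rfl]
  set G₁ : Sp N → ℝ := (ball (0:Sp N) ρ).indicator (fun z => f z * u (x + z)) with hG₁
  set G₂ : Sp N → ℝ := (ball (0:Sp N) ρ).indicator f with hG₂
  have hu' : Continuous fun z : Sp N => u (x + z) := hucont.comp (continuous_const.add continuous_id)
  have hint1 : Integrable (fun z => f z * u (x + z)) := by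
    have h := hfint.bdd_mul (c := C) hu'.aestronglyMeasurable
      (Eventually.of_forall fun z => by simpa using hC (x + z))
    simpa [mul_comm] using h
  have hG1int : Integrable G₁ := (integrable_indicator_iff measurableSet_ball).2 hint1.integrableOn
  have hG2int : Integrable G₂ := (integrable_indicator_iff measurableSet_ball).2 hfint.integrableOn
  obtain ⟨hI1, hInt1⟩ := polar_aux G₁ hG1int
  obtain ⟨hI2, hInt2⟩ := polar_aux G₂ hG2int
  -- pointwise identification on the product
  have hnorm : ∀ (e : sphere (0:Sp N) 1) (r : Ioi (0:ℝ)), ‖(r:ℝ) • (e:Sp N)‖ = (r:ℝ) := by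
    rintro e r
    rw [norm_smul, mem_sphere_zero_iff_norm.1 e.2, mul_one, Real.norm_eq_abs,
      abs_of_pos r.2]
  have hfe : ∀ (e : sphere (0:Sp N) 1) (r : Ioi (0:ℝ)), f ((r:ℝ) • (e:Sp N)) = φ r := by
    rintro e r
    refine hfrad _ _ ?_
    rw [hnorm e r, norm_smul, hv1, mul_one, Real.norm_eq_abs, abs_of_pos r.2]
  have hkey1 : (fun p : sphere (0:Sp N) 1 × Ioi (0:ℝ) => G₁ ((p.2:ℝ) • (p.1:Sp N)))
      = fun p => ψ p.2 * u (x + (p.2:ℝ) • (p.1:Sp N)) := by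
    funext p
    obtain ⟨e, r⟩ := p
    simp only [hG₁, hψdef]
    by_cases hlt : (r:ℝ) < ρ
    · rw [indicator_of_mem (by rw [mem_ball_zero_iff, hnorm e r]; exact hlt), hfe e r,
        if_pos hlt]
    · rw [indicator_of_notMem (by rw [mem_ball_zero_iff, hnorm e r]; exact hlt), if_neg hlt,
        zero_mul]
  have hkey2 : (fun p : sphere (0:Sp N) 1 × Ioi (0:ℝ) => G₂ ((p.2:ℝ) • (p.1:Sp N)))
      = fun p => ψ p.2 := by
    funext p
    obtain ⟨e, r⟩ := p
    simp only [hG₂, hψdef]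
    by_cases hlt : (r:ℝ) < ρ
    · rw [indicator_of_mem (by rw [mem_ball_zero_iff, hnorm e r]; exact hlt), hfe e r,
        if_pos hlt]
    · rw [indicator_of_notMem (by rw [mem_ball_zero_iff, hnorm e r]; exact hlt), if_neg hlt]
  rw [hkey1] at hI1 hInt1
  rw [hkey2] at hI2 hInt2
  -- total measure of the sphere
  set c : ℝ := (ν univ).toReal with hc
  have hcpos : 0 < c := by
    refine ENNReal.toReal_pos ?_ (measure_ne_top _ _)
    rw [hν, Measure.toSphere_apply_univ]
    refine mul_ne_zero ?_ (measure_ball_pos _ _ one_pos).ne'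
    rw [hrank]
    exact Nat.cast_ne_zero.2 (by omega)
  -- Fubini
  set W : Ioi (0:ℝ) → ℝ := fun r => ∫ e : sphere (0:Sp N) 1, u (x + (r:ℝ) • (e:Sp N)) ∂ν
    with hW
  have hA : (∫ z in ball (0:Sp N) ρ, f z * u (x + z)) = ∫ r : Ioi (0:ℝ), ψ r * W r ∂κ := by
    rw [← integral_indicator measurableSet_ball, ← hG₁, hI1,
      integral_prod_symm _ hInt1]
    refine integral_congr_ae (Eventually.of_forall fun r => ?_)
    show (∫ e : sphere (0:Sp N) 1, ψ (r:ℝ) * u (x + (r:ℝ) • (e:Sp N)) ∂ν) = ψ (r:ℝ) * W r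
    rw [integral_const_mul]
  have hB : (∫ z in ball (0:Sp N) ρ, f z) = ∫ r : Ioi (0:ℝ), ψ r * c ∂κ := by
    rw [← integral_indicator measurableSet_ball, ← hG₂, hI2,
      integral_prod_symm _ hInt2]
    refine integral_congr_ae (Eventually.of_forall fun r => ?_)
    show (∫ _e : sphere (0:Sp N) 1, ψ (r:ℝ) ∂ν) = ψ (r:ℝ) * c
    rw [integral_const, smul_eq_mul, mul_comm]
    rfl
  rw [hA, hB]
  have hg1 : Integrable (fun r : Ioi (0:ℝ) => ψ r * W r) κ := by
    have h := hInt1.integral_prod_right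
    simp only [integral_const_mul] at h
    exact h
  have hg2 : Integrable (fun r : Ioi (0:ℝ) => ψ r * c) κ := by
    have h := hInt2.integral_prod_right
    simp only [integral_const, smul_eq_mul] at h
    exact h.congr (Eventually.of_forall fun r => mul_comm _ _)
  rw [← integral_const_mul]
  refine integral_mono (hg2.const_mul (u x)) hg1 fun r => ?_
  by_cases hlt : (r:ℝ) < ρ
  · have hφnn : 0 ≤ φ r := hfnn _
    have hψr : ψ (r:ℝ) = φ r := if_pos hlt
    have hmean' := hmean r r.2 (le_of_lt hlt)
    rw [average_eq, smul_eq_mul] at hmean'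
    change u x ≤ c⁻¹ * _ at hmean'
    have h2 : c * u x ≤ W r := by
      have h3 := mul_le_mul_of_nonneg_left hmean' hcpos.le
      rwa [← mul_assoc, mul_inv_cancel₀ hcpos.ne', one_mul] at h3
    calc u x * (ψ r * c) = φ r * (c * u x) := by rw [hψr]; ring
      _ ≤ φ r * W r := mul_le_mul_of_nonneg_left h2 hφnn
      _ = ψ r * W r := by rw [hψr]
  · have hψr : ψ (r:ℝ) = 0 := if_neg hlt
    simp [hψr]
end
end

section
/- (Uniform smallness of the rescaled nonlocal operator on smooth functions.) Let N ≥ 1, 0 ≤ m < 2, and let J satisfy assumption (1.4). Then, for every u ∈ C²_c(ℝ^N) (twice continuously differentiable with compact support), sup_{x ∈ ℝ^N} ε^{−m} |(J_ε ∗ u)(x) − u(x)| → 0 as ε → 0⁺. -/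
open MeasureTheory Filter Metric Set

noncomputable section

/-! ### Auxiliary lemmas -/

lemma integral_comp_sub_left' {N : ℕ} (f : Sp N → ℝ) (x : Sp N) :
    ∫ y, f (x - y) = ∫ y, f y := by
  have h2 := integral_neg_eq_self (fun y : Sp N => f (x - y)) volume
  simp only [sub_neg_eq_add] at h2
  rw [← h2, integral_add_left_eq_self f x]

/-- Change of variables: `(J_ε ∗ u)(x) = ∫ J(w) u(x - εw) dw`. -/
lemma conv_eq {N : ℕ} (J u : Sp N → ℝ) {ε : ℝ} (hε : 0 < ε) (x : Sp N) :
    convJ N J ε u x = ∫ w, J w * u (x - ε • w) := by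
  have hεN : (0:ℝ) < ε ^ N := pow_pos hε N
  have h2 := integral_comp_sub_left'
    (fun z : Sp N => (1 / ε ^ N) * (J (ε⁻¹ • z) * u (x - z))) x
  beta_reduce at h2
  have h0 : convJ N J ε u x
      = ∫ y, (1 / ε ^ N) * (J (ε⁻¹ • (x - y)) * u (x - (x - y))) := by
    unfold convJ Jresc
    congr 1
    funext y
    rw [show x - (x - y) = y by abel, mul_assoc]
  rw [h0, h2]
  have h4 := MeasureTheory.Measure.integral_comp_inv_smul_of_nonneg (volume : Measure (Sp N))
    (fun w : Sp N => J w * u (x - ε • w)) hε.le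
  beta_reduce at h4
  have h5 : ∀ z : Sp N, ε • ε⁻¹ • z = z := by
    intro z; rw [smul_smul, mul_inv_cancel₀ hε.ne', one_smul]
  simp only [h5] at h4
  rw [integral_const_mul, h4, finrank_euclideanSpace_fin, smul_eq_mul]
  field_simp

/-- The elementary interpolation inequality used for the domination. -/
lemma min_bound {m ε r M' K' : ℝ} (hm0 : 0 ≤ m) (hm2 : m ≤ 2) (hε : 0 < ε)
    (hr : 0 ≤ r) (hM : 0 ≤ M') (hK : 0 ≤ K') :
    (1 / ε ^ m) * min M' (K' * (ε * r) ^ 2) ≤ (M' + K') * r ^ m := by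
  have hεm : (0:ℝ) < ε ^ m := Real.rpow_pos_of_pos hε m
  have hrm : (0:ℝ) ≤ r ^ m := Real.rpow_nonneg hr m
  rcases eq_or_lt_of_le hr with h0 | hr0
  · rw [← h0]
    have : min M' (K' * (ε * 0) ^ 2) ≤ 0 := by simp
    calc (1 / ε ^ m) * min M' (K' * (ε * 0) ^ 2) ≤ (1 / ε ^ m) * 0 :=
          mul_le_mul_of_nonneg_left this (by positivity)
      _ ≤ (M' + K') * (0:ℝ) ^ m := by
          rw [mul_zero]; positivity
  · rcases le_or_gt (ε * r) 1 with h1 | h1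
    · have hεr : (0:ℝ) < ε * r := by positivity
      have key : (ε * r) ^ 2 / ε ^ m ≤ r ^ m := by
        have e1 : ((ε * r) ^ 2 : ℝ) = (ε * r) ^ (2:ℝ) := by
          rw [← Real.rpow_natCast (ε * r) 2]; norm_num
        have e2 : ((ε * r) : ℝ) ^ (2:ℝ) = (ε * r) ^ (2 - m) * (ε * r) ^ m := by
          rw [← Real.rpow_add hεr]; ring_nf
        have e3 : ((ε * r) : ℝ) ^ (2 - m) ≤ 1 :=
          Real.rpow_le_one hεr.le h1 (by linarith)
        have e4 : ((ε * r) : ℝ) ^ m = ε ^ m * r ^ m := Real.mul_rpow hε.le hr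
        calc (ε * r) ^ 2 / ε ^ m = (ε * r) ^ (2 - m) * (ε ^ m * r ^ m) / ε ^ m := by
              rw [e1, e2, e4]
          _ ≤ 1 * (ε ^ m * r ^ m) / ε ^ m := by gcongr
          _ = r ^ m := by field_simp
      calc (1 / ε ^ m) * min M' (K' * (ε * r) ^ 2)
          ≤ (1 / ε ^ m) * (K' * (ε * r) ^ 2) :=
            mul_le_mul_of_nonneg_left (min_le_right _ _) (by positivity)
        _ = K' * ((ε * r) ^ 2 / ε ^ m) := by ring
        _ ≤ K' * r ^ m := mul_le_mul_of_nonneg_left key hK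
        _ ≤ (M' + K') * r ^ m := by nlinarith
    · have h2 : 1 / ε ≤ r := by
        rw [div_le_iff₀ hε]; nlinarith
      have key : (1:ℝ) / ε ^ m ≤ r ^ m := by
        have : (1:ℝ) / ε ^ m = (1 / ε) ^ m := by
          rw [one_div, one_div, ← Real.inv_rpow hε.le]
        rw [this]
        exact Real.rpow_le_rpow (by positivity) h2 hm0
      calc (1 / ε ^ m) * min M' (K' * (ε * r) ^ 2)
          ≤ (1 / ε ^ m) * M' := mul_le_mul_of_nonneg_left (min_le_left _ _) (by positivity)
        _ ≤ r ^ m * M' := mul_le_mul_of_nonneg_right key hM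
        _ ≤ (M' + K') * r ^ m := by nlinarith

/-- Second-order Taylor bound for the symmetric second difference. -/
lemma second_diff_bound {N : ℕ} {u : Sp N → ℝ} (hu : ContDiff ℝ 2 u)
    {K : ℝ} (hK0 : 0 ≤ K)
    (hK : ∀ a b : Sp N, ‖fderiv ℝ u a - fderiv ℝ u b‖ ≤ K * ‖a - b‖)
    (x h : Sp N) : |u (x + h) + u (x - h) - 2 * u x| ≤ 2 * K * ‖h‖ ^ 2 := by
  set φ := fderiv ℝ u x with hφ
  have hs : Convex ℝ (closedBall x ‖h‖) := convex_closedBall _ _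
  have hder : ∀ y ∈ closedBall x ‖h‖,
      HasFDerivWithinAt u (fderiv ℝ u y) (closedBall x ‖h‖) y :=
    fun y _ => ((hu.differentiable (by norm_num)) y).hasFDerivAt.hasFDerivWithinAt
  have hbound : ∀ y ∈ closedBall x ‖h‖, ‖fderiv ℝ u y - φ‖ ≤ K * ‖h‖ := by
    intro y hy
    refine (hK y x).trans ?_
    have h1 : ‖y - x‖ ≤ ‖h‖ := by rwa [mem_closedBall_iff_norm] at hy
    exact mul_le_mul_of_nonneg_left h1 hK0
  have hx : x ∈ closedBall x ‖h‖ := mem_closedBall_self (norm_nonneg h)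
  have hxp : x + h ∈ closedBall x ‖h‖ := by
    rw [mem_closedBall_iff_norm, add_sub_cancel_left]
  have hxm : x - h ∈ closedBall x ‖h‖ := by
    rw [mem_closedBall_iff_norm, sub_sub_cancel_left, norm_neg]
  have e1 := Convex.norm_image_sub_le_of_norm_hasFDerivWithin_le' hder hbound hs hx hxp
  have e2 := Convex.norm_image_sub_le_of_norm_hasFDerivWithin_le' hder hbound hs hx hxm
  rw [add_sub_cancel_left] at e1
  rw [sub_sub_cancel_left] at e2
  have hsum : u (x + h) + u (x - h) - 2 * u x
      = (u (x + h) - u x - φ h) + (u (x - h) - u x - φ (-h)) := by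
    have : φ (-h) = -φ h := map_neg φ h
    rw [this]; ring
  rw [hsum]
  calc |(u (x + h) - u x - φ h) + (u (x - h) - u x - φ (-h))|
      ≤ |u (x + h) - u x - φ h| + |u (x - h) - u x - φ (-h)| := abs_add_le _ _
    _ ≤ K * ‖h‖ * ‖h‖ + K * ‖h‖ * ‖-h‖ := by
        rw [← Real.norm_eq_abs, ← Real.norm_eq_abs]
        exact add_le_add e1 e2
    _ = 2 * K * ‖h‖ ^ 2 := by rw [norm_neg]; ring

/-- Symmetrized formula for the nonlocal difference. -/
lemma diff_eq {N : ℕ} (J u : Sp N → ℝ) {M : ℝ} (hJint : Integrable J)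
    (hJsymm : ∀ x y : Sp N, ‖x‖ = ‖y‖ → J x = J y) (hJ1 : (∫ x, J x) = 1)
    (hu_cont : Continuous u) (hubd : ∀ y, ‖u y‖ ≤ M) {ε : ℝ} (hε : 0 < ε) (x : Sp N) :
    2 * (convJ N J ε u x - u x)
      = ∫ w, J w * (u (x - ε • w) + u (x + ε • w) - 2 * u x) := by
  have hI1 : Integrable (fun w : Sp N => J w * u (x - ε • w)) := by
    have hc : Continuous fun w : Sp N => u (x - ε • w) := by fun_prop
    have := hJint.bdd_mul hc.aestronglyMeasurable (ae_of_all _ fun w => hubd _)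
    simpa [mul_comm] using this
  have hI2 : Integrable (fun w : Sp N => J w * u (x + ε • w)) := by
    have hc : Continuous fun w : Sp N => u (x + ε • w) := by fun_prop
    have := hJint.bdd_mul hc.aestronglyMeasurable (ae_of_all _ fun w => hubd _)
    simpa [mul_comm] using this
  have hIc : Integrable (fun w : Sp N => J w * u x) := hJint.mul_const _
  have hI3 : Integrable (fun w : Sp N => J w * (u (x - ε • w) - u x)) := by
    have := hI1.sub hIc
    simpa [mul_sub, Pi.sub_def] using this
  have hI4 : Integrable (fun w : Sp N => J w * (u (x + ε • w) - u x)) := by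
    have := hI2.sub hIc
    simpa [mul_sub, Pi.sub_def] using this
  have hA : convJ N J ε u x - u x = ∫ w, J w * (u (x - ε • w) - u x) := by
    rw [conv_eq J u hε x]
    have h1 : ∫ w, J w * (u (x - ε • w) - u x)
        = (∫ w, J w * u (x - ε • w)) - ∫ w, J w * u x := by
      rw [← integral_sub hI1 hIc]; congr 1; funext w; ring
    have h2 : ∫ w, J w * u x = u x := by
      rw [integral_mul_const, hJ1, one_mul]
    rw [h1, h2]
  have hB : (∫ w, J w * (u (x - ε • w) - u x))
      = ∫ w, J w * (u (x + ε • w) - u x) := by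
    have h3 := integral_neg_eq_self (fun w : Sp N => J w * (u (x - ε • w) - u x)) volume
    simp only [smul_neg, sub_neg_eq_add] at h3
    rw [← h3]
    congr 1; funext w
    rw [hJsymm (-w) w (by simp)]
  have h4 : (∫ w, J w * (u (x - ε • w) - u x)) + (∫ w, J w * (u (x + ε • w) - u x))
      = ∫ w, J w * (u (x - ε • w) + u (x + ε • w) - 2 * u x) := by
    rw [← integral_add hI3 hI4]; congr 1; funext w; ring
  rw [hA, two_mul]
  nth_rewrite 2 [hB]
  rw [h4]

/-- The auxiliary profile whose integral against `J` dominates everything. -/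
def psi (M K m ε r : ℝ) : ℝ := (1 / ε ^ m) * min (4 * M) (2 * K * (ε * r) ^ 2) / 2

lemma psi_nonneg {M K m ε : ℝ} (hM : 0 ≤ M) (hK : 0 ≤ K) (hε : 0 < ε) (r : ℝ) :
    0 ≤ psi M K m ε r := by
  unfold psi
  have h1 : (0:ℝ) ≤ 1 / ε ^ m :=
    div_nonneg zero_le_one (Real.rpow_nonneg hε.le m)
  have h2 : (0:ℝ) ≤ min (4 * M) (2 * K * (ε * r) ^ 2) :=
    le_min (by positivity) (by positivity)
  positivity

lemma psi_le_dom {M K m ε r : ℝ} (hm0 : 0 ≤ m) (hm2 : m ≤ 2) (hε : 0 < ε)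
    (hr : 0 ≤ r) (hM : 0 ≤ M) (hK : 0 ≤ K) :
    psi M K m ε r ≤ (4 * M + 2 * K) * r ^ m := by
  have h1 := min_bound (M' := 4 * M) (K' := 2 * K) hm0 hm2 hε hr
    (by positivity) (by positivity)
  have h2 : (0:ℝ) ≤ (1 / ε ^ m) * min (4 * M) (2 * K * (ε * r) ^ 2) := by
    have h3 : (0:ℝ) ≤ 1 / ε ^ m :=
      div_nonneg zero_le_one (Real.rpow_nonneg hε.le m)
    have h4 : (0:ℝ) ≤ min (4 * M) (2 * K * (ε * r) ^ 2) :=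
      le_min (by positivity) (by positivity)
    positivity
  unfold psi
  linarith

lemma psi_le_sq {M K m ε r : ℝ} (hM : 0 ≤ M) (hε : 0 < ε) :
    psi M K m ε r ≤ K * r ^ 2 * ε ^ (2 - m) := by
  unfold psi
  have h2 : (0:ℝ) ≤ 1 / ε ^ m :=
    div_nonneg zero_le_one (Real.rpow_nonneg hε.le m)
  have key : ε ^ (2 - m) = ε ^ (2:ℕ) / ε ^ m := by
    rw [Real.rpow_sub hε]
    congr 1
    rw [show ((2:ℝ)) = ((2:ℕ):ℝ) by norm_num, Real.rpow_natCast]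
  calc (1 / ε ^ m) * min (4 * M) (2 * K * (ε * r) ^ 2) / 2
      ≤ (1 / ε ^ m) * (2 * K * (ε * r) ^ 2) / 2 := by
        gcongr
        exact min_le_right _ _
    _ = K * r ^ 2 * (ε ^ (2:ℕ) / ε ^ m) := by ring
    _ = K * r ^ 2 * ε ^ (2 - m) := by rw [key]

lemma psi_continuous {M K m ε : ℝ} : Continuous (fun r : ℝ => psi M K m ε r) := by
  unfold psi
  exact ((continuous_const.mul (continuous_const.min
    (continuous_const.mul ((continuous_const.mul continuous_id).pow 2)))).div_const 2)

/-- **Uniform smallness of the rescaled nonlocal operator.** For `0 ≤ m < 2` and `J` as in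
(1.4), for every `u ∈ C²_c(ℝ^N)` one has `sup_x ε^{-m} |(J_ε ∗ u)(x) - u(x)| → 0` as
`ε → 0⁺`. -/
theorem statement13 (N : ℕ) (hN : 1 ≤ N) (m : ℝ) (hm0 : 0 ≤ m) (hm2 : m < 2)
    (J : Sp N → ℝ) (hJ : assumpJ N J m)
    (u : Sp N → ℝ) (hu : ContDiff ℝ 2 u) (husupp : HasCompactSupport u) :
    Tendsto (fun ε : ℝ => ⨆ x : Sp N, (1 / ε ^ m) * |convJ N J ε u x - u x|)
      (nhdsWithin 0 (Set.Ioi 0)) (nhds 0) := by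
  obtain ⟨hJint, hJ0, hJsymm, hJ1, hJm⟩ := hJ
  obtain ⟨M, hM⟩ := husupp.exists_bound_of_continuous hu.continuous
  have hM0 : 0 ≤ M := le_trans (norm_nonneg _) (hM 0)
  obtain ⟨K', hK'⟩ := ContDiff.lipschitzWith_of_hasCompactSupport
    (husupp.fderiv ℝ) (hu.fderiv_right (m := 1) (by norm_num)) (by norm_num)
  set K : ℝ := (K' : ℝ) with hKdef
  have hK0 : 0 ≤ K := K'.coe_nonneg
  have hK : ∀ a b : Sp N, ‖fderiv ℝ u a - fderiv ℝ u b‖ ≤ K * ‖a - b‖ := by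
    intro a b
    have := hK'.dist_le_mul a b
    rwa [dist_eq_norm, dist_eq_norm] at this
  -- The dominating integral functional
  have hΦ : Tendsto (fun ε : ℝ => ∫ w : Sp N, J w * psi M K m ε ‖w‖)
      (nhdsWithin 0 (Set.Ioi 0)) (nhds 0) := by
    have h0 : (nhds (0:ℝ)) = nhds (∫ _ : Sp N, (0:ℝ)) := by simp
    rw [h0]
    refine tendsto_integral_filter_of_dominated_convergence
      (fun w : Sp N => (4 * M + 2 * K) * (J w * ‖w‖ ^ m)) ?_ ?_ ?_ ?_
    · filter_upwards with ε
      exact hJint.aestronglyMeasurable.mul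
        ((psi_continuous.comp continuous_norm).aestronglyMeasurable)
    · filter_upwards [self_mem_nhdsWithin] with ε hε
      have hε' : (0:ℝ) < ε := hε
      filter_upwards with w
      rw [Real.norm_eq_abs,
        abs_of_nonneg (mul_nonneg (hJ0 w) (psi_nonneg hM0 hK0 hε' ‖w‖))]
      calc J w * psi M K m ε ‖w‖
          ≤ J w * ((4 * M + 2 * K) * ‖w‖ ^ m) :=
            mul_le_mul_of_nonneg_left
              (psi_le_dom hm0 hm2.le hε' (norm_nonneg w) hM0 hK0) (hJ0 w)
        _ = (4 * M + 2 * K) * (J w * ‖w‖ ^ m) := by ring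
    · exact hJm.const_mul _
    · filter_upwards with w
      have hrp : Tendsto (fun ε : ℝ => ε ^ (2 - m)) (nhdsWithin 0 (Set.Ioi 0))
          (nhds 0) := by
        have hc : ContinuousAt (fun ε : ℝ => ε ^ (2 - m)) 0 :=
          Real.continuousAt_rpow_const 0 _ (Or.inr (by linarith))
        have h5 := hc.tendsto
        rw [Real.zero_rpow (by linarith : (2:ℝ) - m ≠ 0)] at h5
        exact h5.mono_left nhdsWithin_le_nhds
      have hg : Tendsto (fun ε : ℝ => (J w * (K * ‖w‖ ^ 2)) * ε ^ (2 - m))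
          (nhdsWithin 0 (Set.Ioi 0)) (nhds 0) := by
        simpa using hrp.const_mul (J w * (K * ‖w‖ ^ 2))
      refine squeeze_zero' ?_ ?_ hg
      · filter_upwards [self_mem_nhdsWithin] with ε hε
        exact mul_nonneg (hJ0 w) (psi_nonneg hM0 hK0 hε ‖w‖)
      · filter_upwards [self_mem_nhdsWithin] with ε hε
        have hε' : (0:ℝ) < ε := hε
        calc J w * psi M K m ε ‖w‖
            ≤ J w * (K * ‖w‖ ^ 2 * ε ^ (2 - m)) :=
              mul_le_mul_of_nonneg_left (psi_le_sq hM0 hε') (hJ0 w)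
          _ = (J w * (K * ‖w‖ ^ 2)) * ε ^ (2 - m) := by ring
  refine squeeze_zero' ?_ ?_ hΦ
  · filter_upwards [self_mem_nhdsWithin] with ε hε
    have hε' : (0:ℝ) < ε := hε
    exact Real.iSup_nonneg fun x =>
      mul_nonneg (div_nonneg zero_le_one (Real.rpow_nonneg hε'.le m)) (abs_nonneg _)
  · filter_upwards [self_mem_nhdsWithin] with ε hε
    have hε' : (0:ℝ) < ε := hε
    refine ciSup_le fun x => ?_
    -- integrability of the min-bound
    have hmincont : Continuous fun w : Sp N => min (4 * M) (2 * K * (ε * ‖w‖) ^ 2) := by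
      exact continuous_const.min
        (continuous_const.mul ((continuous_const.mul continuous_norm).pow 2))
    have hImin : Integrable (fun w : Sp N => J w * min (4 * M) (2 * K * (ε * ‖w‖) ^ 2)) := by
      have hb : ∀ w : Sp N, ‖min (4 * M) (2 * K * (ε * ‖w‖) ^ 2)‖ ≤ 4 * M := by
        intro w
        rw [Real.norm_eq_abs, abs_of_nonneg (le_min (by positivity) (by positivity))]
        exact min_le_left _ _
      have := hJint.bdd_mul hmincont.aestronglyMeasurable (ae_of_all _ hb)
      simpa [mul_comm] using this
    -- integrability of the symmetrized integrand
    have hI1 : Integrable (fun w : Sp N => J w * u (x - ε • w)) := by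
      have hc : Continuous fun w : Sp N => u (x - ε • w) :=
        hu.continuous.comp (by fun_prop)
      have := hJint.bdd_mul hc.aestronglyMeasurable (ae_of_all _ fun w => hM _)
      simpa [mul_comm] using this
    have hI2 : Integrable (fun w : Sp N => J w * u (x + ε • w)) := by
      have hc : Continuous fun w : Sp N => u (x + ε • w) :=
        hu.continuous.comp (by fun_prop)
      have := hJint.bdd_mul hc.aestronglyMeasurable (ae_of_all _ fun w => hM _)
      simpa [mul_comm] using this
    have hIc : Integrable (fun w : Sp N => J w * u x) := hJint.mul_const _
    have hIg : Integrable (fun w : Sp N =>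
        J w * (u (x - ε • w) + u (x + ε • w) - 2 * u x)) := by
      have := (hI1.add hI2).sub (hIc.const_mul 2)
      have heq : (fun w : Sp N => J w * (u (x - ε • w) + u (x + ε • w) - 2 * u x))
          = fun w : Sp N => (J w * u (x - ε • w) + J w * u (x + ε • w))
            - 2 * (J w * u x) := by
        funext w; ring
      rw [heq]
      exact this
    -- pointwise bound on the symmetrized integrand
    have hptw : ∀ w : Sp N, |J w * (u (x - ε • w) + u (x + ε • w) - 2 * u x)|
        ≤ J w * min (4 * M) (2 * K * (ε * ‖w‖) ^ 2) := by
      intro w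
      rw [abs_mul, abs_of_nonneg (hJ0 w)]
      refine mul_le_mul_of_nonneg_left ?_ (hJ0 w)
      refine le_min ?_ ?_
      · calc |u (x - ε • w) + u (x + ε • w) - 2 * u x|
            ≤ |u (x - ε • w)| + |u (x + ε • w)| + 2 * |u x| := by
              have := abs_add_le (u (x - ε • w) + u (x + ε • w)) (-(2 * u x))
              simp only [abs_neg] at this
              calc |u (x - ε • w) + u (x + ε • w) - 2 * u x|
                  = |u (x - ε • w) + u (x + ε • w) + -(2 * u x)| := by ring_nf
                _ ≤ |u (x - ε • w) + u (x + ε • w)| + |2 * u x| := this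
                _ ≤ |u (x - ε • w)| + |u (x + ε • w)| + 2 * |u x| := by
                    have h6 := abs_add_le (u (x - ε • w)) (u (x + ε • w))
                    rw [abs_mul, abs_two]
                    linarith
          _ ≤ 4 * M := by
              have h7 := hM (x - ε • w)
              have h8 := hM (x + ε • w)
              have h9 := hM x
              rw [Real.norm_eq_abs] at h7 h8 h9
              linarith
      · have h10 : u (x - ε • w) + u (x + ε • w) - 2 * u x
            = u (x + ε • w) + u (x - ε • w) - 2 * u x := by ring
        rw [h10]
        have h11 := second_diff_bound hu hK0 hK x (ε • w)
        have h12 : ‖ε • w‖ = ε * ‖w‖ := by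
          rw [norm_smul, Real.norm_eq_abs, abs_of_pos hε']
        rw [h12] at h11
        exact h11
    -- conclusion of the per-point bound
    have hdiff := diff_eq J u hJint hJsymm hJ1 hu.continuous hM hε' x
    have habs : |∫ w, J w * (u (x - ε • w) + u (x + ε • w) - 2 * u x)|
        ≤ ∫ w, J w * min (4 * M) (2 * K * (ε * ‖w‖) ^ 2) := by
      calc |∫ w, J w * (u (x - ε • w) + u (x + ε • w) - 2 * u x)|
          ≤ ∫ w, |J w * (u (x - ε • w) + u (x + ε • w) - 2 * u x)| :=
            by
              have hni := norm_integral_le_integral_norm (μ := volume)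
                (fun w : Sp N => J w * (u (x - ε • w) + u (x + ε • w) - 2 * u x))
              simpa only [Real.norm_eq_abs] using hni
        _ ≤ ∫ w, J w * min (4 * M) (2 * K * (ε * ‖w‖) ^ 2) :=
            integral_mono hIg.abs hImin hptw
    have h5 : 2 * |convJ N J ε u x - u x|
        ≤ ∫ w, J w * min (4 * M) (2 * K * (ε * ‖w‖) ^ 2) := by
      have h13 : (2:ℝ) * |convJ N J ε u x - u x| = |2 * (convJ N J ε u x - u x)| := by
        rw [abs_mul, abs_two]
      rw [h13, hdiff]
      exact habs
    have hΦeq : ∫ w : Sp N, J w * psi M K m ε ‖w‖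
        = (1 / ε ^ m) * (∫ w, J w * min (4 * M) (2 * K * (ε * ‖w‖) ^ 2)) / 2 := by
      rw [show (1 / ε ^ m) * (∫ w, J w * min (4 * M) (2 * K * (ε * ‖w‖) ^ 2)) / 2
          = ((1 / ε ^ m) / 2) * ∫ w, J w * min (4 * M) (2 * K * (ε * ‖w‖) ^ 2) by ring]
      rw [← integral_const_mul]
      congr 1
      funext w
      unfold psi
      ring
    have hεm : (0:ℝ) ≤ 1 / ε ^ m :=
      div_nonneg zero_le_one (Real.rpow_nonneg hε'.le m)
    calc (1 / ε ^ m) * |convJ N J ε u x - u x|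
        ≤ (1 / ε ^ m) * ((∫ w, J w * min (4 * M) (2 * K * (ε * ‖w‖) ^ 2)) / 2) := by
          refine mul_le_mul_of_nonneg_left ?_ hεm
          linarith
      _ = ∫ w : Sp N, J w * psi M K m ε ‖w‖ := by rw [hΦeq]; ring
end
end

section
/- (Key elementary inequality in the super-solution construction.) Let N ≥ 1, β > 0, set p := ⌊β⌋ + 1 and q := p/β. Let R ≥ 1, 0 < τ < 1, and let x, y ∈ ℝ^N satisfy |x| ≥ R and |y| < |x|/2. Then τ (|x|^β − |x+y|^β) / (1 + τ |x+y|^β) ≤ 2^β R^{−1/q} (1 + |y|)^β. -/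
open MeasureTheory Filter Metric Set

noncomputable section

/-!
Write `r = ‖x‖`, `s = ‖x + y‖`, `t = ‖y‖` and `c = β / p ∈ (0, 1]`, so that `r - s ≤ t` and
`r ≤ 2 s`. Since `u ↦ u ^ c` is subadditive,
`r ^ β - s ^ β = (r ^ p) ^ c - (s ^ p) ^ c ≤ (r ^ p - s ^ p) ^ c ≤ (p t r ^ (p - 1)) ^ c`,
and Bernoulli's inequality `p t ≤ (1 + t) ^ p` turns this into `(1 + t) ^ β r ^ (β - c)`.
Finally `r ^ (-c) ≤ R ^ (-c)` and `r ^ β ≤ 2 ^ β s ^ β`, and the factor `s ^ β` is absorbed by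
the denominator `1 + τ s ^ β`.
-/

open Real

lemma pow_rpow_div_natCast {a : ℝ} (ha : 0 ≤ a) {n : ℕ} (hn : n ≠ 0) (β : ℝ) :
    (a ^ n) ^ (β / n) = a ^ β := by
  rw [← rpow_natCast, ← rpow_mul ha, mul_div_cancel₀ _ (Nat.cast_ne_zero.mpr hn)]

lemma rpow_sub_rpow_le_rpow_sub {r s c : ℝ} (hs : 0 ≤ s) (hsr : s ≤ r) (hc0 : 0 ≤ c)
    (hc1 : c ≤ 1) : r ^ c - s ^ c ≤ (r - s) ^ c := by
  have := rpow_add_le_add_rpow (sub_nonneg.mpr hsr) hs hc0 hc1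
  rw [sub_add_cancel] at this
  linarith

lemma pow_sub_pow_le_mul_sub {r s : ℝ} (hs : 0 ≤ s) (hsr : s ≤ r) (n : ℕ) :
    r ^ n - s ^ n ≤ n * r ^ (n - 1) * (r - s) := by
  have h := abs_pow_sub_pow_le r s n
  rw [abs_of_nonneg (sub_nonneg.mpr (pow_le_pow_left₀ hs hsr n)),
    abs_of_nonneg (sub_nonneg.mpr hsr), abs_of_nonneg hs, abs_of_nonneg (hs.trans hsr),
    max_eq_left hsr] at h
  linarith

lemma rpow_sub_rpow_le_one_add_rpow_mul_rpow {r s t β : ℝ} {p : ℕ} (hβ : 0 < β) (hβp : β ≤ p)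
    (hr : 0 ≤ r) (hs : 0 ≤ s) (ht : 0 ≤ t) (hrst : r - s ≤ t) :
    r ^ β - s ^ β ≤ (1 + t) ^ β * r ^ (β - β / p) := by
  rcases le_or_gt r s with hrs | hsr
  · have : r ^ β ≤ s ^ β := rpow_le_rpow hr hrs hβ.le
    have : 0 ≤ (1 + t) ^ β * r ^ (β - β / p) := by positivity
    linarith
  have hp : 0 < p := by exact_mod_cast hβ.trans_le hβp
  have hc0 : 0 ≤ β / p := by positivity
  have hc1 : β / p ≤ 1 := div_le_one_of_le₀ hβp (Nat.cast_nonneg p)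
  have hbernoulli : p * t ≤ (1 + t) ^ p := by
    linarith [one_add_mul_le_pow (a := t) (by linarith) p]
  have hr_pred : (r ^ (p - 1)) ^ (β / p) = r ^ (β - β / p) := by
    rw [← rpow_natCast, ← rpow_mul hr, Nat.cast_sub hp, Nat.cast_one]
    field_simp
  calc r ^ β - s ^ β = (r ^ p) ^ (β / p) - (s ^ p) ^ (β / p) := by
        rw [pow_rpow_div_natCast hr hp.ne', pow_rpow_div_natCast hs hp.ne']
    _ ≤ (r ^ p - s ^ p) ^ (β / p) :=
        rpow_sub_rpow_le_rpow_sub (by positivity) (by gcongr) hc0 hc1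
    _ ≤ (p * t * r ^ (p - 1)) ^ (β / p) := by
        have hmean := pow_sub_pow_le_mul_sub hs hsr.le p
        gcongr
        · exact sub_nonneg.mpr (by gcongr)
        · have : (p : ℝ) * r ^ (p - 1) * (r - s) ≤ p * r ^ (p - 1) * t := by gcongr
          linarith
    _ = (p * t) ^ (β / p) * r ^ (β - β / p) := by
        rw [mul_rpow (by positivity) (by positivity), hr_pred]
    _ ≤ ((1 + t) ^ p) ^ (β / p) * r ^ (β - β / p) := by gcongr
    _ = (1 + t) ^ β * r ^ (β - β / p) := by rw [pow_rpow_div_natCast (by positivity) hp.ne']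

theorem statement17_general (N : ℕ) (β : ℝ) (hβ : 0 < β)
    (p : ℕ) (hp : p = Nat.floor β + 1) (q : ℝ) (hq : q = (p : ℝ) / β)
    (R : ℝ) (hR : 1 ≤ R) (τ : ℝ) (hτ0 : 0 < τ)
    (x y : Sp N) (hx : R ≤ ‖x‖) (hy : ‖y‖ < ‖x‖ / 2) :
    τ * (‖x‖ ^ β - ‖x + y‖ ^ β) / (1 + τ * ‖x + y‖ ^ β) ≤
      2 ^ β * R ^ (-1 / q) * (1 + ‖y‖) ^ β := by
  have hβp : β ≤ p := by rw [hp]; push_cast; exact (Nat.lt_floor_add_one β).le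
  have hxy : ‖x‖ - ‖x + y‖ ≤ ‖y‖ := by simpa using norm_sub_norm_le x (x + y)
  have hkey : ‖x‖ ^ β - ‖x + y‖ ^ β ≤ (1 + ‖y‖) ^ β * ‖x‖ ^ (β - β / p) :=
    rpow_sub_rpow_le_one_add_rpow_mul_rpow hβ hβp (norm_nonneg _) (norm_nonneg _)
      (norm_nonneg _) hxy
  have hdecay : ‖x‖ ^ (β - β / p) ≤ 2 ^ β * R ^ (-(β / p)) * ‖x + y‖ ^ β :=
    calc ‖x‖ ^ (β - β / p) = ‖x‖ ^ (-(β / p)) * ‖x‖ ^ β := by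
          rw [sub_eq_neg_add, rpow_add (by linarith)]
      _ ≤ R ^ (-(β / p)) * (2 * ‖x + y‖) ^ β := by
          have hR_decay : ‖x‖ ^ (-(β / p)) ≤ R ^ (-(β / p)) :=
            rpow_le_rpow_of_nonpos (by linarith) hx (neg_nonpos.mpr (by positivity))
          have hx_double : ‖x‖ ^ β ≤ (2 * ‖x + y‖) ^ β :=
            rpow_le_rpow (norm_nonneg _) (by linarith) hβ.le
          gcongr
      _ = 2 ^ β * R ^ (-(β / p)) * ‖x + y‖ ^ β := by
          rw [mul_rpow zero_le_two (norm_nonneg _)]; ring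
  rw [hq, neg_div, one_div_div, div_le_iff₀ (by positivity)]
  calc τ * (‖x‖ ^ β - ‖x + y‖ ^ β)
      ≤ τ * ((1 + ‖y‖) ^ β * (2 ^ β * R ^ (-(β / p)) * ‖x + y‖ ^ β)) := by
        gcongr; exact hkey.trans (by gcongr)
    _ = 2 ^ β * R ^ (-(β / p)) * (1 + ‖y‖) ^ β * (τ * ‖x + y‖ ^ β) := by ring
    _ ≤ 2 ^ β * R ^ (-(β / p)) * (1 + ‖y‖) ^ β * (1 + τ * ‖x + y‖ ^ β) := by
        gcongr; linarith

/-- **Key elementary inequality in the super-solution construction.** With `p = ⌊β⌋ + 1` and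
`q = p/β`, for `R ≥ 1`, `0 < τ < 1`, `|x| ≥ R` and `|y| < |x|/2`, one has
`τ(|x|^β - |x+y|^β)/(1 + τ|x+y|^β) ≤ 2^β R^{-1/q} (1+|y|)^β`. -/
theorem statement17 (N : ℕ) (hN : 1 ≤ N) (β : ℝ) (hβ : 0 < β)
    (p : ℕ) (hp : p = Nat.floor β + 1) (q : ℝ) (hq : q = (p : ℝ) / β)
    (R : ℝ) (hR : 1 ≤ R) (τ : ℝ) (hτ0 : 0 < τ) (hτ1 : τ < 1)
    (x y : Sp N) (hx : R ≤ ‖x‖) (hy : ‖y‖ < ‖x‖ / 2) :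
    τ * (‖x‖ ^ β - ‖x + y‖ ^ β) / (1 + τ * ‖x + y‖ ^ β) ≤
      2 ^ β * R ^ (-1 / q) * (1 + ‖y‖) ^ β :=
  statement17_general N β hβ p hp q hq R hR τ hτ0 x y hx hy
end
end
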